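/- arXiv:1109.4475 — 8 statements merged into one kernel-verified Lean document; each statement's English description precedes it below -/
import Mathlib

section
/- For the complete directed graph G_n on n vertices, the number of spanning directed rooted trees T of G_n with d_T(c) = n-1-k for a fixed vertex c equals binomial(n-1, k) * (n-1)^k, where d_T(c) is the out-degree of c in T. -/
/-- `IsDipath T a b p` : `p` is the list of successive vertices (after `a`) of a
directed path from `a` to `b` using edges of the relation `T`. -/
def IsDipath {V : Type} (T : V → V → Prop) : V → V → List V → Prop
  | a, b, [] => a = b
  | a, b, c :: p => T a c ∧ IsDipath T c b p

/-- `T` is a spanning directed rooted tree of the digraph `E` with root `r`: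
its edges are edges of `E` and every vertex is reached by a unique directed path from `r`. -/
def IsSpanningDitree {V : Type} (E T : V → V → Prop) (r : V) : Prop :=
  (∀ x y, T x y → E x y) ∧ ∀ x : V, ∃! p : List V, IsDipath T r x p

/-- The edge relation associated to a finite set of directed edges. -/
def edgeRel {V : Type} [DecidableEq V] (F : Finset (V × V)) : V → V → Prop :=
  fun x y => (x, y) ∈ F

/-- A finite set of directed edges is a directed forest in the digraph `E`:
all edges belong to `E`, every vertex has in-degree at most one, and there are
no directed cycles.  (Equivalently, it is a disjoint union of directed rooted trees.) -/
def IsDirectedForest {V : Type} [DecidableEq V] (E : V → V → Prop) (F : Finset (V × V)) : Prop :=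
  (∀ e ∈ F, E e.1 e.2) ∧
  (∀ x y y' : V, (y, x) ∈ F → (y', x) ∈ F → y = y') ∧
  ∀ (x : V) (p : List V), p ≠ [] → ¬ IsDipath (edgeRel F) x x p

/-- A facet of the complex of directed trees `Δ(E)`: a maximal directed forest. -/
def IsFacet {V : Type} [DecidableEq V] (E : V → V → Prop) (F : Finset (V × V)) : Prop :=
  IsDirectedForest E F ∧ ∀ F', IsDirectedForest E F' → F ⊆ F' → F' = F

/-- Finset version of a spanning directed rooted tree. -/
def IsSpanningTreeFinset {V : Type} [DecidableEq V] (E : V → V → Prop)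
    (T : Finset (V × V)) (r : V) : Prop :=
  (∀ e ∈ T, E e.1 e.2) ∧ ∀ x : V, ∃! p : List V, IsDipath (edgeRel T) r x p

/-- The out-degree of a vertex `c` in a finite set of directed edges. -/
def outDeg {V : Type} [DecidableEq V] (T : Finset (V × V)) (c : V) : ℕ :=
  (T.filter fun e => e.1 = c).card

/-!
A spanning rooted tree of the complete digraph on `α` is the same as a root `r` together with a
parent map `f`: its edges are the pairs `(f x, x)` with `x ≠ r`, and `d_T(c)` is the number of
children of `c`. Rooted trees on a vertex set `V` are in bijection with lists of length `#V - 1`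
over `V` through the Prüfer code: delete the largest leaf, record its parent, and repeat. Every
vertex occurs in the code as often as it has children, so the leaves are exactly the vertices
missing from the code, which is what makes the code decodable. Hence the trees with
`d_T(c) = n - 1 - k` correspond to the lists of length `n - 1` containing `c` exactly `n - 1 - k`
times, and there are `(n - 1).choose k * (n - 1) ^ k` of those: choose the `k` other positions
and fill each with one of the other `n - 1` vertices.
-/

open Finset Function

section Dipath

variable {β : Type} {E : β → β → Prop}

theorem isDipath_append {a b : β} {p q : List β} :
    IsDipath E a b (p ++ q) ↔ ∃ z, IsDipath E a z p ∧ IsDipath E z b q := by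
  induction p generalizing a with
  | nil => simp [IsDipath]
  | cons c p ih => simp [IsDipath, ih, and_assoc]

theorem IsDipath.concat {a b c : β} {p : List β} (h : IsDipath E a b p) (hE : E b c) :
    IsDipath E a c (p ++ [c]) :=
  isDipath_append.2 ⟨b, h, hE, rfl⟩

theorem IsDipath.endpoint_unique {a b b' : β} {p : List β} (h : IsDipath E a b p)
    (h' : IsDipath E a b' p) : b = b' := by
  induction p generalizing a with
  | nil => exact (h : a = b).symm.trans h'
  | cons c p ih => exact ih h.2 h'.2

theorem IsDipath.iterate_length_eq {f : β → β} (hf : ∀ y z, E z y → f y = z) {a x : β}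
    {p : List β} (h : IsDipath E a x p) : f^[p.length] x = a := by
  induction p generalizing a with
  | nil => exact (h : a = x).symm
  | cons c p ih =>
    rw [List.length_cons, iterate_succ_apply', ih h.2]
    exact hf c a h.1

theorem exists_isDipath_of_iterate_eq {f : β → β} {r : β} (hE : ∀ x, x ≠ r → E (f x) x) :
    ∀ (m : ℕ) (x : β), f^[m] x = r → ∃ p, IsDipath E r x p
  | 0, x, hx => ⟨[], hx.symm⟩
  | m + 1, x, hx => by
    by_cases hxr : x = r
    · exact ⟨[], hxr.symm⟩
    · obtain ⟨p, hp⟩ := exists_isDipath_of_iterate_eq hE m (f x) hx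
      exact ⟨p ++ [x], hp.concat (hE x hxr)⟩

theorem IsDipath.unique {r : β} (hin : ∀ x z z', E z x → E z' x → z = z')
    (hr : ∀ z, ¬ E z r) {x : β} {p q : List β} (hp : IsDipath E r x p)
    (hq : IsDipath E r x q) : p = q := by
  induction p using List.reverseRecOn generalizing x q with
  | nil =>
    obtain rfl : r = x := hp
    rcases q.eq_nil_or_concat' with rfl | ⟨q, y, rfl⟩
    · rfl
    · obtain ⟨z, -, hzy, rfl⟩ := isDipath_append.1 hq
      exact absurd hzy (hr z)
  | append_singleton p y ih =>
    obtain ⟨z, hpz, hzy, rfl⟩ := isDipath_append.1 hp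
    rcases q.eq_nil_or_concat' with rfl | ⟨q, y', rfl⟩
    · obtain rfl : r = y := hq
      exact absurd hzy (hr z)
    · obtain ⟨z', hqz, hzy', rfl⟩ := isDipath_append.1 hq
      obtain rfl := hin _ z z' hzy hzy'
      rw [ih hpz hqz]

end Dipath

variable {α : Type}

/-- A rooted tree on `V`, given by its parent map `f`. The root and the vertices outside `V` are
fixed points of `f`, so that the pair `(r, f)` determines the tree. -/
structure IsRootedTree (V : Finset α) (r : α) (f : α → α) : Prop where
  root_mem : r ∈ V
  apply_root : f r = r
  apply_of_notMem : ∀ x ∉ V, f x = x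
  exists_iterate_eq_root : ∀ x ∈ V, ∃ m, f^[m] x = r

namespace IsRootedTree

variable {V : Finset α} {r : α} {f : α → α}

theorem apply_ne_self (h : IsRootedTree V r f) {x : α} (hx : x ∈ V) (hxr : x ≠ r) :
    f x ≠ x := by
  intro hfx
  obtain ⟨m, hm⟩ := h.exists_iterate_eq_root x hx
  exact hxr (by rwa [iterate_fixed hfx] at hm)

theorem apply_mem (h : IsRootedTree V r f) {x : α} (hx : x ∈ V) : f x ∈ V := by
  by_contra hfx
  obtain ⟨m, hm⟩ := h.exists_iterate_eq_root x hx
  cases m with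
  | zero => exact hfx (by rw [show x = r from hm, h.apply_root]; exact h.root_mem)
  | succ m =>
    rw [iterate_succ_apply, iterate_fixed (h.apply_of_notMem _ hfx)] at hm
    exact hfx (hm ▸ h.root_mem)

theorem eq_id_of_singleton (h : IsRootedTree {r} r f) : f = id := by
  funext x
  by_cases hx : x = r
  · rw [hx, h.apply_root]
    rfl
  · exact h.apply_of_notMem x (by simpa using hx)

end IsRootedTree

theorem isRootedTree_singleton (v : α) : IsRootedTree {v} v id :=
  ⟨mem_singleton_self v, rfl, fun _ _ => rfl, fun _ hx => ⟨0, mem_singleton.1 hx⟩⟩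

section ParentMap

variable [DecidableEq α] {V : Finset α} {r : α} {f : α → α}

def numChildren (V : Finset α) (r : α) (f : α → α) (v : α) : ℕ :=
  #{y ∈ V.erase r | f y = v}

def leaves (V : Finset α) (r : α) (f : α → α) : Finset α :=
  {v ∈ V.erase r | numChildren V r f v = 0}

theorem numChildren_eq_erase_add {x : α} (hx : x ∈ V) (hxr : x ≠ r) (v : α) :
    numChildren V r f v = numChildren (V.erase x) r f v + if f x = v then 1 else 0 := by
  unfold numChildren
  rw [erase_right_comm, filter_erase _ x]
  split_ifs with hv
  · rw [card_erase_add_one (mem_filter.2 ⟨mem_erase.2 ⟨hxr, hx⟩, hv⟩)]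
  · have hxv : x ∉ {y ∈ V.erase r | f y = v} := fun hmem => hv (mem_filter.1 hmem).2
    rw [erase_eq_of_notMem hxv, add_zero]

theorem numChildren_update_of_notMem {x : α} (hx : x ∉ V) (a : α) :
    numChildren V r (update f x a) = numChildren V r f := by
  funext v
  unfold numChildren
  congr 1
  refine filter_congr fun y hy => ?_
  rw [update_of_ne (ne_of_mem_of_not_mem (mem_of_mem_erase hy) hx)]

theorem iterate_update_eq {W : Finset α} (hW : ∀ y ∈ W, f y ∈ W) {x : α} (hx : x ∉ W)
    (a : α) {y : α} (hy : y ∈ W) (m : ℕ) : (update f x a)^[m] y = f^[m] y := by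
  induction m generalizing y with
  | zero => rfl
  | succ m ih =>
    rw [iterate_succ_apply, iterate_succ_apply, update_of_ne (ne_of_mem_of_not_mem hy hx),
      ih (hW y hy)]

namespace IsRootedTree

theorem numChildren_root_pos (h : IsRootedTree V r f) {x : α} (hx : x ∈ V) (hxr : x ≠ r) :
    0 < numChildren V r f r := by
  obtain ⟨m, hm⟩ := h.exists_iterate_eq_root x hx
  induction m generalizing x with
  | zero => exact absurd hm hxr
  | succ m ih =>
    by_cases hfx : f x = r
    · exact card_pos.2 ⟨x, mem_filter.2 ⟨mem_erase.2 ⟨hxr, hx⟩, hfx⟩⟩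
    · exact ih (h.apply_mem hx) hfx hm

/-- The children counts add up to `#(V.erase r)` and the root has a child, so some non-root
vertex has none. -/
theorem leaves_nonempty (h : IsRootedTree V r f) {x : α} (hx : x ∈ V) (hxr : x ≠ r) :
    (leaves V r f).Nonempty := by
  by_contra hne
  have hchild : ∀ v ∈ V.erase r, 1 ≤ numChildren V r f v := fun v hv => by
    by_contra h0
    exact hne ⟨v, mem_filter.2 ⟨hv, by omega⟩⟩
  have hsum : #(V.erase r) = ∑ v ∈ V, numChildren V r f v :=
    card_eq_sum_card_fiberwise fun y hy => h.apply_mem (mem_of_mem_erase hy)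
  rw [← add_sum_erase V _ h.root_mem] at hsum
  have : #(V.erase r) ≤ ∑ v ∈ V.erase r, numChildren V r f v := by
    simpa using card_nsmul_le_sum (V.erase r) _ 1 hchild
  have := h.numChildren_root_pos hx hxr
  omega

theorem eq_singleton_of_not_leaves_nonempty (h : IsRootedTree V r f)
    (hl : ¬ (leaves V r f).Nonempty) : V = {r} := by
  refine eq_singleton_iff_unique_mem.2 ⟨h.root_mem, fun x hx => ?_⟩
  by_contra hxr
  exact hl (h.leaves_nonempty hx hxr)

theorem erase_leaf (h : IsRootedTree V r f) {x : α} (hx : x ∈ leaves V r f) :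
    IsRootedTree (V.erase x) r (update f x x) := by
  obtain ⟨hxr, hxV⟩ := mem_erase.1 (mem_filter.1 hx).1
  have hnochild : ∀ y ∈ V.erase r, ¬ f y = x :=
    filter_eq_empty_iff.1 (card_eq_zero.1 (mem_filter.1 hx).2)
  have hW : ∀ y ∈ V.erase x, f y ∈ V.erase x := fun y hy => by
    obtain ⟨hyx, hyV⟩ := mem_erase.1 hy
    refine mem_erase.2 ⟨fun hfy => ?_, h.apply_mem hyV⟩
    by_cases hyr : y = r
    · rw [hyr, h.apply_root] at hfy
      exact hxr hfy.symm
    · exact hnochild y (mem_erase.2 ⟨hyr, hyV⟩) hfy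
  refine ⟨mem_erase.2 ⟨hxr.symm, h.root_mem⟩, by rw [update_of_ne hxr.symm, h.apply_root],
    fun y hy => ?_, fun y hy => ?_⟩
  · by_cases hyx : y = x
    · rw [hyx, update_self]
    · rw [update_of_ne hyx]
      exact h.apply_of_notMem y fun hyV => hy (mem_erase.2 ⟨hyx, hyV⟩)
  · obtain ⟨m, hm⟩ := h.exists_iterate_eq_root y (mem_of_mem_erase hy)
    exact ⟨m, by rw [iterate_update_eq hW (notMem_erase x V) x hy, hm]⟩

theorem insert_leaf (h : IsRootedTree V r f) {x a : α} (hx : x ∉ V) (ha : a ∈ V) :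
    IsRootedTree (insert x V) r (update f x a) := by
  have hrx : r ≠ x := ne_of_mem_of_not_mem h.root_mem hx
  have hiter {y : α} (hy : y ∈ V) (m : ℕ) : (update f x a)^[m] y = f^[m] y :=
    iterate_update_eq (fun _ => h.apply_mem) hx a hy m
  refine ⟨mem_insert_of_mem h.root_mem, by rw [update_of_ne hrx, h.apply_root],
    fun y hy => ?_, fun y hy => ?_⟩
  · rw [mem_insert, not_or] at hy
    rw [update_of_ne hy.1, h.apply_of_notMem y hy.2]
  · rcases mem_insert.1 hy with rfl | hyV
    · obtain ⟨m, hm⟩ := h.exists_iterate_eq_root a ha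
      exact ⟨m + 1, by rw [iterate_succ_apply, update_self, hiter ha, hm]⟩
    · obtain ⟨m, hm⟩ := h.exists_iterate_eq_root y hyV
      exact ⟨m, by rw [hiter hyV, hm]⟩

end IsRootedTree

namespace IsSpanningTreeFinset

variable {E : α → α → Prop} {T : Finset (α × α)}

theorem edge_into_root_notMem (hT : IsSpanningTreeFinset E T r) (z : α) : (z, r) ∉ T := by
  intro hz
  obtain ⟨p, hp, -⟩ := hT.2 z
  have := (hT.2 r).unique (y₂ := []) (hp.concat hz) rfl
  simp at this

theorem parent_unique (hT : IsSpanningTreeFinset E T r) {x z z' : α} (hz : (z, x) ∈ T)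
    (hz' : (z', x) ∈ T) : z = z' := by
  obtain ⟨p, hp, -⟩ := hT.2 z
  obtain ⟨p', hp', -⟩ := hT.2 z'
  have := (hT.2 x).unique (hp.concat hz) (hp'.concat hz')
  exact hp.endpoint_unique (List.append_cancel_right this ▸ hp')

theorem exists_parent (hT : IsSpanningTreeFinset E T r) {x : α} (hxr : x ≠ r) :
    ∃ z, (z, x) ∈ T := by
  obtain ⟨p, hp, -⟩ := hT.2 x
  rcases p.eq_nil_or_concat' with rfl | ⟨p, y, rfl⟩
  · exact absurd (hp : r = x).symm hxr
  · obtain ⟨z, -, hzy, rfl⟩ := isDipath_append.1 hp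
    exact ⟨z, hzy⟩

end IsSpanningTreeFinset

end ParentMap

section SpanningTree

variable [Fintype α] [DecidableEq α]

def parentEdges (r : α) (f : α → α) : Finset (α × α) :=
  (univ.erase r).image fun x => (f x, x)

theorem mem_parentEdges {r : α} {f : α → α} {x y : α} :
    (y, x) ∈ parentEdges r f ↔ x ≠ r ∧ f x = y := by
  simp [parentEdges]

theorem outDeg_parentEdges (r : α) (f : α → α) (c : α) :
    outDeg (parentEdges r f) c = numChildren univ r f c := by
  rw [outDeg, parentEdges, filter_image,
    card_image_of_injective _ fun x y h => (Prod.ext_iff.1 h).2]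
  rfl

theorem isSpanningTreeFinset_parentEdges {r : α} {f : α → α} (h : IsRootedTree univ r f) :
    IsSpanningTreeFinset (fun x y => x ≠ y) (parentEdges r f) r := by
  refine ⟨fun ⟨y, x⟩ he => ?_, fun x => ?_⟩
  · obtain ⟨hxr, rfl⟩ := mem_parentEdges.1 he
    exact h.apply_ne_self (mem_univ x) hxr
  · obtain ⟨m, hm⟩ := h.exists_iterate_eq_root x (mem_univ x)
    obtain ⟨p, hp⟩ := exists_isDipath_of_iterate_eq (E := edgeRel (parentEdges r f))
      (fun x hxr => mem_parentEdges.2 ⟨hxr, rfl⟩) m x hm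
    have hin (x z z' : α) (hz : (z, x) ∈ parentEdges r f) (hz' : (z', x) ∈ parentEdges r f) :
        z = z' :=
      (mem_parentEdges.1 hz).2.symm.trans (mem_parentEdges.1 hz').2
    exact ⟨p, hp, fun q hq => hq.unique hin (fun z hz => (mem_parentEdges.1 hz).1 rfl) hp⟩

theorem eq_of_parentEdges_eq {r r' : α} {f f' : α → α} (h : IsRootedTree univ r f)
    (h' : IsRootedTree univ r' f') (heq : parentEdges r f = parentEdges r' f') :
    r = r' ∧ f = f' := by
  obtain rfl : r = r' := by
    by_contra hne
    have : (f' r, r) ∈ parentEdges r f := heq ▸ mem_parentEdges.2 ⟨hne, rfl⟩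
    exact (mem_parentEdges.1 this).1 rfl
  refine ⟨rfl, funext fun x => ?_⟩
  by_cases hxr : x = r
  · rw [hxr, h.apply_root, h'.apply_root]
  · have : (f x, x) ∈ parentEdges r f' := heq ▸ mem_parentEdges.2 ⟨hxr, rfl⟩
    exact (mem_parentEdges.1 this).2.symm

theorem IsSpanningTreeFinset.exists_eq_parentEdges {E : α → α → Prop} {T : Finset (α × α)}
    {r : α} (hT : IsSpanningTreeFinset E T r) :
    ∃ f, IsRootedTree univ r f ∧ parentEdges r f = T := by
  choose! g hg using fun x (hxr : x ≠ r) => hT.exists_parent hxr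
  have hf : ∀ x z, (z, x) ∈ T → update g r r x = z := fun x z hz => by
    have hxr : x ≠ r := fun h => hT.edge_into_root_notMem z (h ▸ hz)
    rw [update_of_ne hxr]
    exact hT.parent_unique (hg x hxr) hz
  refine ⟨update g r r, ⟨mem_univ r, update_self .., fun x hx => absurd (mem_univ x) hx,
    fun x _ => ?_⟩, ?_⟩
  · obtain ⟨p, hp, -⟩ := hT.2 x
    exact ⟨p.length, hp.iterate_length_eq hf⟩
  · ext ⟨y, x⟩
    rw [mem_parentEdges]
    refine ⟨fun ⟨hxr, hy⟩ => ?_, fun hyx => ⟨fun hxr => ?_, hf x y hyx⟩⟩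
    · rw [← hy, update_of_ne hxr]
      exact hg x hxr
    · exact hT.edge_into_root_notMem y (hxr ▸ hyx)

noncomputable def rootedTreeEquivSpanningTree (c : α) (j : ℕ) :
    {p : α × (α → α) // IsRootedTree univ p.1 p.2 ∧ numChildren univ p.1 p.2 c = j} ≃
      {T : Finset (α × α) //
        (∃ r, IsSpanningTreeFinset (fun x y => x ≠ y) T r) ∧ outDeg T c = j} :=
  Equiv.ofBijective
    (fun p => ⟨parentEdges p.1.1 p.1.2, ⟨p.1.1, isSpanningTreeFinset_parentEdges p.2.1⟩,
      (outDeg_parentEdges _ _ c).trans p.2.2⟩)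
    ⟨fun p q hpq => Subtype.ext <| Prod.ext_iff.2 <|
        eq_of_parentEdges_eq p.2.1 q.2.1 (congrArg Subtype.val hpq),
      fun ⟨_, ⟨r, hT⟩, hc⟩ => by
        obtain ⟨f, hf, rfl⟩ := hT.exists_eq_parentEdges
        exact ⟨⟨(r, f), hf, (outDeg_parentEdges r f c).symm.trans hc⟩, rfl⟩⟩

end SpanningTree

section Prufer

variable {V : Finset α}

def IsPruferCode (V : Finset α) (s : List α) : Prop :=
  (∀ b ∈ s, b ∈ V) ∧ s.length + 1 = #V

theorem IsPruferCode.eq_singleton (hs : IsPruferCode V []) : ∃ v, V = {v} :=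
  card_eq_one.1 hs.2.symm

variable [LinearOrder α] {r : α} {f : α → α}

def pruferCode (V : Finset α) (r : α) (f : α → α) : List α :=
  if h : (leaves V r f).Nonempty then
    let x := (leaves V r f).max' h
    f x :: pruferCode (V.erase x) r (update f x x)
  else []
termination_by #V
decreasing_by exact card_erase_lt_of_mem (mem_of_mem_erase (mem_of_mem_filter _ (max'_mem _ h)))

/-- `d` is only a junk value for `Finset.max` of an empty set, which never occurs on a
list satisfying `IsPruferCode V`. -/
def pruferDecode (d : α) : Finset α → List α → α × (α → α)
  | V, [] => (V.max.getD d, id)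
  | V, a :: s =>
    let x := (V \ (a :: s).toFinset).max.getD d
    ((pruferDecode d (V.erase x) s).1, update (pruferDecode d (V.erase x) s).2 x a)

theorem pruferDecode_singleton (d v : α) : pruferDecode d {v} [] = (v, id) := by
  rw [pruferDecode, max_singleton]
  rfl

theorem pruferDecode_cons {d a x : α} {s : List α} (hx : (V \ (a :: s).toFinset).max = x) :
    pruferDecode d V (a :: s) =
      ((pruferDecode d (V.erase x) s).1, update (pruferDecode d (V.erase x) s).2 x a) := by
  rw [pruferDecode, hx]
  rfl

theorem IsPruferCode.exists_erase_max {a : α} {s : List α} (hs : IsPruferCode V (a :: s)) :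
    ∃ x ∈ V, (V \ (a :: s).toFinset).max = x ∧ x ∉ a :: s ∧
      IsPruferCode (V.erase x) s := by
  have hne : (V \ (a :: s).toFinset).Nonempty := by
    refine sdiff_nonempty.2 fun hsub => ?_
    have := card_le_card hsub
    have := (a :: s).toFinset_card_le
    have := hs.2
    omega
  obtain ⟨hxV, hxs⟩ := mem_sdiff.1 (max'_mem _ hne)
  rw [List.mem_toFinset] at hxs
  refine ⟨_, hxV, (coe_max' hne).symm, hxs,
    fun b hb => mem_erase.2 ⟨?_, hs.1 b (.tail a hb)⟩, ?_⟩
  · rintro rfl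
    exact hxs (.tail a hb)
  · rw [card_erase_of_mem hxV, ← hs.2]
    rfl

namespace IsRootedTree

theorem leaves_eq_sdiff (h : IsRootedTree V r f) {x : α} (hx : x ∈ V) (hxr : x ≠ r)
    {s : List α} (hs : ∀ v, s.count v = numChildren V r f v) :
    leaves V r f = V \ s.toFinset := by
  have hr : r ∈ s := List.count_pos_iff.1 ((hs r).symm ▸ h.numChildren_root_pos hx hxr)
  ext v
  simp only [leaves, mem_filter, mem_erase, mem_sdiff, List.mem_toFinset, ← hs,
    List.count_eq_zero]
  exact ⟨fun ⟨⟨_, hv⟩, hvs⟩ => ⟨hv, hvs⟩,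
    fun ⟨hv, hvs⟩ => ⟨⟨fun hvr => hvs (hvr ▸ hr), hv⟩, hvs⟩⟩

theorem count_pruferCode (h : IsRootedTree V r f) (v : α) :
    (pruferCode V r f).count v = numChildren V r f v := by
  induction V, f using pruferCode.induct r with
  | case1 V f hl x ih =>
    have hx : x ∈ leaves V r f := max'_mem _ hl
    obtain ⟨hxr, hxV⟩ := mem_erase.1 (mem_filter.1 hx).1
    rw [pruferCode, dif_pos hl, List.count_cons, ih (h.erase_leaf hx),
      numChildren_update_of_notMem (notMem_erase x V), numChildren_eq_erase_add hxV hxr]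
    simp [x]
  | case2 V f hl =>
    rw [pruferCode, dif_neg hl, h.eq_singleton_of_not_leaves_nonempty hl]
    simp [numChildren]

theorem length_pruferCode (h : IsRootedTree V r f) : (pruferCode V r f).length + 1 = #V := by
  induction V, f using pruferCode.induct r with
  | case1 V f hl x ih =>
    have hx : x ∈ leaves V r f := max'_mem _ hl
    rw [pruferCode, dif_pos hl, List.length_cons, ih (h.erase_leaf hx),
      card_erase_add_one (mem_of_mem_erase (mem_filter.1 hx).1)]
  | case2 V f hl =>
    rw [pruferCode, dif_neg hl, h.eq_singleton_of_not_leaves_nonempty hl]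
    rfl

theorem isPruferCode_pruferCode (h : IsRootedTree V r f) : IsPruferCode V (pruferCode V r f) := by
  refine ⟨fun b hb => ?_, h.length_pruferCode⟩
  rw [← List.count_pos_iff, h.count_pruferCode, numChildren, card_pos] at hb
  obtain ⟨y, hy⟩ := hb
  obtain ⟨hyV, rfl⟩ := mem_filter.1 hy
  exact h.apply_mem (mem_of_mem_erase hyV)

theorem pruferDecode_pruferCode (d : α) (h : IsRootedTree V r f) :
    pruferDecode d V (pruferCode V r f) = (r, f) := by
  induction V, f using pruferCode.induct r with
  | case1 V f hl x ih =>
    have hx : x ∈ leaves V r f := max'_mem _ hl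
    obtain ⟨hxr, hxV⟩ := mem_erase.1 (mem_filter.1 hx).1
    have hmax : (V \ (pruferCode V r f).toFinset).max = x := by
      rw [← h.leaves_eq_sdiff hxV hxr h.count_pruferCode, ← coe_max' hl]
    rw [pruferCode, dif_pos hl] at hmax ⊢
    rw [pruferDecode_cons hmax, ih (h.erase_leaf hx), update_idem, update_eq_self]
  | case2 V f hl =>
    obtain rfl := h.eq_singleton_of_not_leaves_nonempty hl
    rw [pruferCode, dif_neg hl, pruferDecode_singleton, h.eq_id_of_singleton]

end IsRootedTree

theorem pruferDecode_spec (d : α) {s : List α} {V : Finset α} (hs : IsPruferCode V s) :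
    IsRootedTree V (pruferDecode d V s).1 (pruferDecode d V s).2 ∧
      ∀ v, numChildren V (pruferDecode d V s).1 (pruferDecode d V s).2 v = s.count v := by
  induction s generalizing V with
  | nil =>
    obtain ⟨v, rfl⟩ := hs.eq_singleton
    rw [pruferDecode_singleton]
    exact ⟨isRootedTree_singleton v, fun w => by simp [numChildren]⟩
  | cons a s ih =>
    obtain ⟨x, hxV, hmax, hxs, hs'⟩ := hs.exists_erase_max
    obtain ⟨htree, hcount⟩ := ih hs'
    rw [pruferDecode_cons hmax]
    generalize pruferDecode d (V.erase x) s = p at htree hcount ⊢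
    obtain ⟨r, g⟩ := p
    dsimp only at htree hcount ⊢
    have hrx : r ≠ x := ne_of_mem_erase htree.root_mem
    have haW : a ∈ V.erase x :=
      mem_erase.2 ⟨fun hax => hxs (hax ▸ List.mem_cons_self), hs.1 a List.mem_cons_self⟩
    have htreeV := htree.insert_leaf (notMem_erase x V) haW
    rw [insert_erase hxV] at htreeV
    refine ⟨htreeV, fun v => ?_⟩
    rw [numChildren_eq_erase_add hxV hrx.symm, numChildren_update_of_notMem (notMem_erase x V),
      hcount, update_self, List.count_cons]
    simp

theorem pruferCode_pruferDecode (d : α) {s : List α} {V : Finset α} (hs : IsPruferCode V s) :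
    pruferCode V (pruferDecode d V s).1 (pruferDecode d V s).2 = s := by
  induction s generalizing V with
  | nil =>
    obtain ⟨v, rfl⟩ := hs.eq_singleton
    rw [pruferDecode_singleton, pruferCode, dif_neg]
    simp [leaves]
  | cons a s ih =>
    obtain ⟨x, hxV, hmax, hxs, hs'⟩ := hs.exists_erase_max
    obtain ⟨htree, hcount⟩ := pruferDecode_spec d hs
    obtain ⟨htree', -⟩ := pruferDecode_spec d hs'
    have hcode := ih hs'
    rw [pruferDecode_cons hmax] at htree hcount ⊢
    generalize pruferDecode d (V.erase x) s = p at htree hcount htree' hcode ⊢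
    obtain ⟨r, g⟩ := p
    dsimp only at htree hcount htree' hcode ⊢
    have hrx : r ≠ x := ne_of_mem_erase htree'.root_mem
    have hleaves := htree.leaves_eq_sdiff hxV hrx.symm fun v => (hcount v).symm
    have hl : (leaves V r (update g x a)).Nonempty :=
      hleaves ▸ ⟨x, mem_sdiff.2 ⟨hxV, by simpa using hxs⟩⟩
    have hx : (leaves V r (update g x a)).max' hl = x := by
      apply WithBot.coe_injective
      rw [coe_max', hleaves, hmax]
    rw [pruferCode, dif_pos hl]
    simp only [hx, update_self, update_idem]
    rw [update_eq_self_iff.2 (htree'.apply_of_notMem x (notMem_erase x V)).symm, hcode]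

def pruferEquiv (d : α) (V : Finset α) :
    {p : α × (α → α) // IsRootedTree V p.1 p.2} ≃ {s : List α // IsPruferCode V s} where
  toFun p := ⟨pruferCode V p.1.1 p.1.2, p.2.isPruferCode_pruferCode⟩
  invFun s := ⟨pruferDecode d V s, (pruferDecode_spec d s.2).1⟩
  left_inv p := Subtype.ext (p.2.pruferDecode_pruferCode d)
  right_inv s := Subtype.ext (pruferCode_pruferDecode d s.2)

end Prufer

theorem card_filter_card_fiber_eq {ι β : Type*} [Fintype ι] [DecidableEq ι] [Fintype β]
    [DecidableEq β] (c : β) (j : ℕ) :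
    #{g : ι → β | #{i | g i = c} = j} =
      (Fintype.card ι).choose j * (Fintype.card β - 1) ^ (Fintype.card ι - j) := by
  have hfiber : ∀ S ∈ powersetCard j (univ : Finset ι),
      #{g ∈ {g : ι → β | #{i | g i = c} = j} | ({i | g i = c} : Finset ι) = S} =
        (Fintype.card β - 1) ^ (Fintype.card ι - j) := by
    intro S hS
    have hpi : ({g ∈ {g : ι → β | #{i | g i = c} = j} | ({i | g i = c} : Finset ι) = S} :
        Finset (ι → β)) =
        Fintype.piFinset fun i => if i ∈ S then {c} else univ.erase c := by
      ext g
      simp only [mem_filter, mem_univ, true_and, Fintype.mem_piFinset]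
      constructor
      · rintro ⟨-, rfl⟩ i
        split_ifs with hi <;> simp_all
      · intro hg
        have hS' : ({i | g i = c} : Finset ι) = S := by
          ext i
          specialize hg i
          split_ifs at hg with hi <;> simp_all
        exact ⟨hS' ▸ (mem_powersetCard.1 hS).2, hS'⟩
    rw [hpi, Fintype.card_piFinset]
    simp only [apply_ite, card_singleton, card_erase_of_mem, mem_univ, card_univ, prod_ite,
      subset_univ, filter_mem_eq_of_subset, prod_const_one, prod_const, one_mul]
    rw [show ({i | i ∉ S} : Finset ι) = Sᶜ by ext; simp, card_compl, (mem_powersetCard.1 hS).2]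
  rw [card_eq_sum_card_fiberwise (f := fun g => ({i | g i = c} : Finset ι))
    (s := {g : ι → β | #{i | g i = c} = j}) (t := powersetCard j univ)
    fun g hg => mem_powersetCard.2 ⟨subset_univ _, (mem_filter.1 hg).2⟩,
    sum_congr rfl hfiber, sum_const, card_powersetCard, card_univ, smul_eq_mul]

theorem List.count_ofFn {β : Type*} [DecidableEq β] {m : ℕ} (g : Fin m → β) (c : β) :
    (List.ofFn g).count c = #{i | g i = c} := by
  induction m with
  | zero => simp
  | succ m ih =>
    rw [List.ofFn_succ, List.count_cons, ih, Fin.card_filter_univ_succ', add_comm]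
    simp

theorem card_lists_count_eq {β : Type*} [Fintype β] [DecidableEq β] (c : β) (m j : ℕ) :
    Nat.card {s : List β // s.length = m ∧ s.count c = j} =
      m.choose j * (Fintype.card β - 1) ^ (m - j) := by
  have e : {s : List β // s.length = m ∧ s.count c = j} ≃
      {g : Fin m → β // #{i | g i = c} = j} :=
    (Equiv.subtypeSubtypeEquivSubtypeInter (fun s : List β => s.length = m)
      (fun s => s.count c = j)).symm.trans <|
      (Equiv.vectorEquivFin β m).subtypeEquiv fun v => by
        rw [← List.count_ofFn]
        change _ ↔ List.count c (List.ofFn v.get) = j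
        rw [← List.Vector.toList_ofFn, List.Vector.ofFn_get]
        rfl
  rw [Nat.card_congr e, Nat.card_eq_fintype_card, Fintype.card_subtype, card_filter_card_fiber_eq,
    Fintype.card_fin]

theorem card_rootedTrees_numChildren_eq [LinearOrder α] [Fintype α] (c : α) (j : ℕ) :
    Nat.card {p : α × (α → α) //
        IsRootedTree univ p.1 p.2 ∧ numChildren univ p.1 p.2 c = j} =
      (Fintype.card α - 1).choose j * (Fintype.card α - 1) ^ (Fintype.card α - 1 - j) := by
  have hcard : 0 < Fintype.card α := Fintype.card_pos_iff.2 ⟨c⟩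
  have e : {p : α × (α → α) // IsRootedTree univ p.1 p.2 ∧ numChildren univ p.1 p.2 c = j}
      ≃ {s : List α // s.length = Fintype.card α - 1 ∧ s.count c = j} :=
    (Equiv.subtypeSubtypeEquivSubtypeInter (fun p : α × (α → α) => IsRootedTree univ p.1 p.2)
      (fun p => numChildren univ p.1 p.2 c = j)).symm.trans <|
    ((pruferEquiv c univ).subtypeEquiv fun p => by
      rw [← p.2.count_pruferCode]; rfl).trans <|
    (Equiv.subtypeSubtypeEquivSubtypeInter (IsPruferCode univ) (fun s => s.count c = j)).trans <|
    Equiv.subtypeEquivRight fun s => by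
      simp only [IsPruferCode, mem_univ, implies_true, true_and, card_univ]
      omega
  rw [Nat.card_congr e, card_lists_count_eq]

theorem numSpanningTreesWithOutdeg_general (n k : ℕ) (hk : k ≤ n - 1) (c : Fin n) :
    Nat.card {T : Finset (Fin n × Fin n) //
        (∃ r : Fin n, IsSpanningTreeFinset (fun x y => x ≠ y) T r) ∧ outDeg T c = n - 1 - k} =
      Nat.choose (n - 1) k * (n - 1) ^ k := by
  rw [← Nat.card_congr (rootedTreeEquivSpanningTree c _), card_rootedTrees_numChildren_eq,
    Fintype.card_fin, Nat.sub_sub_self hk, Nat.choose_symm hk]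

/-- For the complete directed graph `G_n` on `n` vertices, the number of spanning directed
rooted trees `T` with `d_T(c) = n - 1 - k` for a fixed vertex `c` equals
`(n-1).choose k * (n-1)^k`. -/
theorem numSpanningTreesWithOutdeg (n k : ℕ) (hn : 1 ≤ n) (hk : k ≤ n - 1) (c : Fin n) :
    Nat.card {T : Finset (Fin n × Fin n) //
        (∃ r : Fin n, IsSpanningTreeFinset (fun x y => x ≠ y) T r) ∧ outDeg T c = n - 1 - k} =
      Nat.choose (n - 1) k * (n - 1) ^ k :=
  numSpanningTreesWithOutdeg_general n k hk c
end

section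
/- Let D be a directed graph with a complete source c, let T be a spanning directed rooted tree of D with root r, and let x→y be an edge of T with x ≠ c such that c is below y in T. Then T with edge x→y replaced by c→r is again a spanning directed rooted tree of D. -/
/-- `u` is below `v` in the rooted tree `T`: there is a directed path from `v` to `u`. -/
def Below {V : Type} (T : V → V → Prop) (u v : V) : Prop :=
  ∃ p : List V, IsDipath T v u p

variable {V : Type}

def IsDitree (T : V → V → Prop) (r : V) : Prop :=
  ∀ z : V, ∃! p : List V, IsDipath T r z p

def exchangeEdge (T : V → V → Prop) (x y c r : V) : V → V → Prop :=
  fun a b => (T a b ∧ ¬(a = x ∧ b = y)) ∨ (a = c ∧ b = r)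

namespace IsDipath

variable {T S : V → V → Prop}

theorem append {p q : List V} {a b d : V} (hp : IsDipath T a b p) (hq : IsDipath T b d q) :
    IsDipath T a d (p ++ q) := by
  induction p generalizing a with
  | nil => exact (show a = b from hp) ▸ hq
  | cons w p ih => exact ⟨hp.1, ih hp.2⟩

theorem append_singleton_iff {p : List V} {a b w : V} :
    IsDipath T a b (p ++ [w]) ↔ w = b ∧ ∃ m, IsDipath T a m p ∧ T m b := by
  induction p generalizing a with
  | nil =>
    constructor
    · rintro ⟨h, rfl⟩
      exact ⟨rfl, a, rfl, h⟩
    · rintro ⟨rfl, m, rfl, h⟩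
      exact ⟨h, rfl⟩
  | cons u p ih =>
    simp only [List.cons_append, IsDipath, ih]
    constructor
    · rintro ⟨hau, rfl, m, hm, hmb⟩
      exact ⟨rfl, m, ⟨hau, hm⟩, hmb⟩
    · rintro ⟨rfl, m, ⟨hau, hm⟩, hmb⟩
      exact ⟨hau, rfl, m, hm, hmb⟩

theorem snoc {p : List V} {a b d : V} (hp : IsDipath T a b p) (h : T b d) :
    IsDipath T a d (p ++ [d]) :=
  hp.append ⟨h, rfl⟩

theorem target_eq {p : List V} {a b b' : V} (hb : IsDipath T a b p) (hb' : IsDipath T a b' p) :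
    b = b' := by
  induction p generalizing a with
  | nil => exact (show a = b from hb).symm.trans hb'
  | cons w p ih => exact ih hb.2 hb'.2

/-- `hS` only asks for the `T`-edges that lie on some path from `a` to `b`. -/
theorem of_edges_between {p : List V} {a b : V} (hp : IsDipath T a b p)
    (hS : ∀ u v, T u v → Below T u a → Below T b v → S u v) : IsDipath S a b p := by
  induction p generalizing a with
  | nil => exact hp
  | cons w p ih =>
    refine ⟨hS a w hp.1 ⟨[], rfl⟩ ⟨p, hp.2⟩, ih hp.2 fun u v huv ⟨q, hq⟩ hb => ?_⟩
    exact hS u v huv ⟨w :: q, hp.1, hq⟩ hb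

theorem eq_of_indeg_le_one {a : V} (hroot : ∀ u, ¬ T u a)
    (hin : ∀ u v z, T u z → T v z → u = v) {p q : List V} {z : V}
    (hp : IsDipath T a z p) (hq : IsDipath T a z q) : p = q := by
  induction p using List.reverseRecOn generalizing q z with
  | nil =>
    cases q using List.reverseRecOn with
    | nil => rfl
    | append_singleton q w =>
      obtain ⟨-, m, -, hm⟩ := append_singleton_iff.mp hq
      exact absurd ((show a = z from hp) ▸ hm) (hroot m)
  | append_singleton p w ih =>
    obtain ⟨rfl, m, hpm, hmw⟩ := append_singleton_iff.mp hp
    cases q using List.reverseRecOn with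
    | nil => exact absurd ((show a = w from hq) ▸ hmw) (hroot m)
    | append_singleton q w' =>
      obtain ⟨rfl, m', hqm, hmw'⟩ := append_singleton_iff.mp hq
      obtain rfl := hin m m' _ hmw hmw'
      rw [ih hpm hqm]

theorem exchangeEdge {p : List V} {a b x y c r : V} (hp : IsDipath T a b p)
    (hxy : ¬ (Below T x a ∧ Below T b y)) : IsDipath (exchangeEdge T x y c r) a b p :=
  hp.of_edges_between fun _ _ huv hua hbv =>
    Or.inl ⟨huv, by rintro ⟨rfl, rfl⟩; exact hxy ⟨hua, hbv⟩⟩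

end IsDipath

namespace IsDitree

variable {T : V → V → Prop} {r : V}

theorem below_root (hT : IsDitree T r) (z : V) : Below T z r :=
  (hT z).exists

theorem eq_nil_of_isDipath_self (hT : IsDitree T r) {z : V} {p : List V}
    (hp : IsDipath T z z p) : p = [] := by
  obtain ⟨q, hq⟩ := hT.below_root z
  simpa using congrArg List.length ((hT z).unique hq (hq.append hp))

theorem below_antisymm (hT : IsDitree T r) {u v : V} (huv : Below T u v) (hvu : Below T v u) :
    u = v := by
  obtain ⟨p, hp⟩ := huv
  obtain ⟨q, hq⟩ := hvu
  obtain ⟨rfl, -⟩ := List.append_eq_nil_iff.mp (hT.eq_nil_of_isDipath_self (hp.append hq))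
  exact (show v = u from hp).symm

theorem not_below_of_edge (hT : IsDitree T r) {x y : V} (hxy : T x y) : ¬ Below T x y := by
  rintro ⟨p, hp⟩
  simpa using hT.eq_nil_of_isDipath_self (hp.snoc hxy)

theorem not_edge_root (hT : IsDitree T r) (u : V) : ¬ T u r := by
  intro hu
  obtain ⟨p, hp⟩ := hT.below_root u
  simpa using hT.eq_nil_of_isDipath_self (hp.snoc hu)

theorem eq_of_edge_of_edge (hT : IsDitree T r) {u v z : V} (hu : T u z) (hv : T v z) :
    u = v := by
  obtain ⟨p, hp⟩ := hT.below_root u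
  obtain ⟨q, hq⟩ := hT.below_root v
  have hpq : p = q := by simpa using (hT z).unique (hp.snoc hu) (hq.snoc hv)
  exact hp.target_eq (hpq ▸ hq)

theorem exists_isDipath_exchangeEdge (hT : IsDitree T r) {x y c : V} (hxy : T x y)
    (hcy : Below T c y) (z : V) : ∃ p, IsDipath (exchangeEdge T x y c r) y z p := by
  have from_y : ∀ {b p}, IsDipath T y b p → IsDipath (exchangeEdge T x y c r) y b p :=
    fun hp => hp.exchangeEdge fun h => hT.not_below_of_edge hxy h.1
  by_cases hzy : Below T z y
  · obtain ⟨p, hp⟩ := hzy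
    exact ⟨p, from_y hp⟩
  · obtain ⟨q, hq⟩ := hcy
    obtain ⟨p, hp⟩ := hT.below_root z
    exact ⟨q ++ [r] ++ p, ((from_y hq).snoc (Or.inr ⟨rfl, rfl⟩)).append
      (hp.exchangeEdge fun h => hzy h.2)⟩

theorem not_exchangeEdge_target (hT : IsDitree T r) {x y c : V} (hxy : T x y) (u : V) :
    ¬ exchangeEdge T x y c r u y := by
  rintro (⟨hu, hne⟩ | ⟨-, rfl⟩)
  · exact hne ⟨hT.eq_of_edge_of_edge hu hxy, rfl⟩
  · exact hT.not_edge_root x hxy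

theorem exchangeEdge_eq_of_edge_of_edge (hT : IsDitree T r) {x y c u v z : V}
    (hu : exchangeEdge T x y c r u z) (hv : exchangeEdge T x y c r v z) : u = v := by
  rcases hu with ⟨hu, -⟩ | ⟨rfl, rfl⟩ <;> rcases hv with ⟨hv, -⟩ | ⟨rfl, hvz⟩
  · exact hT.eq_of_edge_of_edge hu hv
  · exact absurd (hvz ▸ hu) (hT.not_edge_root u)
  · exact absurd hv (hT.not_edge_root v)
  · rfl

theorem exchangeEdge (hT : IsDitree T r) {x y c : V} (hxy : T x y) (hcy : Below T c y) :
    IsDitree (exchangeEdge T x y c r) y := fun z =>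
  let ⟨p, hp⟩ := hT.exists_isDipath_exchangeEdge hxy hcy z
  ⟨p, hp, fun _ hq => IsDipath.eq_of_indeg_le_one (hT.not_exchangeEdge_target hxy)
    (fun _ _ _ => hT.exchangeEdge_eq_of_edge_of_edge) hq hp⟩

end IsDitree

theorem exchange_below_general {V : Type} (E T : V → V → Prop) (c r x y : V)
    (hsource : ∀ z : V, z ≠ c → E c z)
    (hT : IsSpanningDitree E T r)
    (hxy : T x y)
    (hbelow : Below T c y) :
    IsSpanningDitree E (fun a b => (T a b ∧ ¬(a = x ∧ b = y)) ∨ (a = c ∧ b = r)) y := by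
  obtain ⟨hE, htree⟩ : (∀ a b, T a b → E a b) ∧ IsDitree T r := hT
  have hrc : r ≠ c := by
    rintro rfl
    exact htree.not_edge_root x (htree.below_antisymm hbelow (htree.below_root y) ▸ hxy)
  refine ⟨?_, htree.exchangeEdge hxy hbelow⟩
  rintro a b (⟨hab, -⟩ | ⟨rfl, rfl⟩)
  · exact hE a b hab
  · exact hsource _ hrc

/-- Let `D` (edge relation `E`) have a complete source `c`, let `T` be a spanning directed
rooted tree with root `r`, and let `x → y` be an edge of `T` with `x ≠ c` such that `c` is
below `y` in `T`.  Then replacing the edge `x → y` by `c → r` again yields a spanning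
directed rooted tree of `D` (with root `y`). -/
theorem exchange_below {V : Type} (E T : V → V → Prop) (c r x y : V)
    (hsource : ∀ z : V, z ≠ c → E c z)
    (hT : IsSpanningDitree E T r)
    (hxy : T x y) (hxc : x ≠ c)
    (hbelow : Below T c y) :
    IsSpanningDitree E (fun a b => (T a b ∧ ¬(a = x ∧ b = y)) ∨ (a = c ∧ b = r)) y :=
  exchange_below_general E T c r x y hsource hT hxy hbelow
end

section
/- For a simple graph G with double directed graph D, the k-skeleton of the complex of directed trees of D is pure if and only if k ≤ |V(G)| - 1 - r(G), where r(G) is the maximal cardinality of a strongly independent subset of V(G). -/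
/-- `A` is a strongly independent set in `G`: it is independent and the neighborhoods
of distinct elements are pairwise disjoint. -/
def StronglyIndep {V : Type} (G : SimpleGraph V) (A : Finset V) : Prop :=
  (∀ x ∈ A, ∀ y ∈ A, ¬ G.Adj x y) ∧
  ∀ x ∈ A, ∀ y ∈ A, x ≠ y → Disjoint (G.neighborSet x) (G.neighborSet y)


/-!
Let `M` be a facet, i.e. a maximal directed forest of the double directed graph of `G`. In-degrees
in `M` are at most one, so `|M| = |V| - |roots M|`. If `w` is a neighbour of a root `u` that does not
lie below `u` in `M`, the edge `w → u` can be added to `M`; so by maximality every neighbour of a root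
lies in its tree. Since the vertices from which a given vertex is reachable are linearly ordered,
the roots form a strongly independent set, and every facet has at least `|V| - r(G)` edges.
Conversely, for a strongly independent `A` with `|A| = r(G)`, the stars `a → N(a)`, `a ∈ A`, form a
directed forest, and every facet containing it has all of `A` among its roots, hence at most
`|V| - r(G)` edges. Finally, the `k`-skeleton is pure exactly when every facet has at least `k + 1`
edges.
-/

open Relation Finset

theorem forall_exists_superset_card_eq_iff {α : Type*} [Finite α] {P : Finset α → Prop}
    (hP : IsLowerSet {s | P s}) (n : ℕ) :
    (∀ s, P s → #s ≤ n → ∃ t, P t ∧ s ⊆ t ∧ #t = n) ↔ ∀ s, Maximal P s → n ≤ #s := by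
  constructor
  · intro h s hs
    by_contra! hlt
    obtain ⟨t, ht, hst, rfl⟩ := h s hs.1 hlt.le
    exact hlt.not_ge (card_le_card (hs.2 ht hst))
  · intro h s hs hsn
    obtain ⟨M, hsM, hM⟩ := Finite.exists_le_maximal hs
    obtain ⟨t, hst, htM, htn⟩ := exists_subsuperset_card_eq hsM hsn (h M hM)
    exact ⟨t, hP htM hM.1, hst, htn⟩

namespace IsDipath

variable {V : Type} {T T' : V → V → Prop}

theorem mono (h : ∀ x y, T x y → T' x y) :
    ∀ {a b : V} {p : List V}, IsDipath T a b p → IsDipath T' a b p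
  | _, _, [], hp => hp
  | _, _, _ :: _, hp => ⟨h _ _ hp.1, mono h hp.2⟩

theorem reflTransGen : ∀ {a b : V} {p : List V}, IsDipath T a b p → ReflTransGen T a b
  | _, _, [], hp => hp ▸ .refl
  | _, _, _ :: _, hp => .head hp.1 (reflTransGen hp.2)

/-- A path using the new edge `u → v` reaches `u` before its first use and leaves `v` after its
last use. -/
theorem of_insert [DecidableEq V] {M : Finset (V × V)} {u v : V} :
    ∀ {a b : V} {p : List V}, IsDipath (edgeRel (insert (u, v) M)) a b p →
      IsDipath (edgeRel M) a b p ∨ (ReflTransGen (edgeRel M) a u ∧ ReflTransGen (edgeRel M) v b)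
  | _, _, [], hp => .inl hp
  | _, _, _ :: _, hp => by
    rcases mem_insert.1 hp.1 with he | he
    · obtain ⟨rfl, rfl⟩ := Prod.mk.inj he
      exact .inr ⟨.refl, (of_insert hp.2).elim reflTransGen And.right⟩
    · rcases of_insert hp.2 with h | h
      · exact .inl ⟨he, h⟩
      · exact .inr ⟨.head he h.1, h.2⟩

end IsDipath

section Forests

variable {V : Type} [DecidableEq V]

theorem isLowerSet_setOf_isDirectedForest (E : V → V → Prop) :
    IsLowerSet {F : Finset (V × V) | IsDirectedForest E F} := by
  intro M F hFM hM
  exact ⟨fun e he => hM.1 e (hFM he), fun x y y' hy hy' => hM.2.1 x y y' (hFM hy) (hFM hy'),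
    fun x p hp hcyc => hM.2.2 x p hp (hcyc.mono fun _ _ hab => hFM hab)⟩

theorem IsDirectedForest.injOn_snd {E : V → V → Prop} {F : Finset (V × V)}
    (hF : IsDirectedForest E F) : Set.InjOn Prod.snd (F : Set (V × V)) := by
  rintro ⟨y, x⟩ hy ⟨y', x'⟩ hy' (rfl : x = x')
  rw [hF.2.1 x y y' hy hy']

theorem IsDirectedForest.reflTransGen_total {E : V → V → Prop} {M : Finset (V × V)}
    (hM : IsDirectedForest E M) {a b c : V}
    (hac : ReflTransGen (edgeRel M) a c) (hbc : ReflTransGen (edgeRel M) b c) :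
    ReflTransGen (edgeRel M) a b ∨ ReflTransGen (edgeRel M) b a := by
  simpa only [reflTransGen_swap, or_comm] using ReflTransGen.total_of_right_unique
    (r := Function.swap (edgeRel M)) hM.2.1 (reflTransGen_swap.2 hac) (reflTransGen_swap.2 hbc)

variable [Fintype V]

def roots (F : Finset (V × V)) : Finset V := (F.image Prod.snd)ᶜ

theorem mem_roots {F : Finset (V × V)} {x : V} : x ∈ roots F ↔ ∀ y, (y, x) ∉ F := by
  simp [roots]

theorem card_add_card_roots {F : Finset (V × V)} (hF : Set.InjOn Prod.snd (F : Set (V × V))) :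
    #F + #(roots F) = Fintype.card V := by
  rw [roots, card_compl, ← card_image_of_injOn hF]
  exact Nat.add_sub_of_le (card_le_univ _)

theorem eq_of_reflTransGen_of_mem_roots {F : Finset (V × V)} {x y : V} (hx : x ∈ roots F)
    (h : ReflTransGen (edgeRel F) y x) : y = x := by
  rcases h.cases_tail with h | ⟨z, -, hzx⟩
  · exact h.symm
  · exact (mem_roots.1 hx z hzx).elim

variable {E : V → V → Prop} {M : Finset (V × V)}

theorem reflTransGen_of_mem_roots (hM : Maximal (IsDirectedForest E) M) {u w : V}
    (hu : u ∈ roots M) (hwu : E w u) : ReflTransGen (edgeRel M) u w := by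
  by_contra hnot
  have hwuM : (w, u) ∉ M := mem_roots.1 hu w
  refine hM.not_prop_of_gt (ssubset_insert hwuM) ⟨?_, ?_, ?_⟩
  · simpa [hwu] using hM.1.1
  · intro x y y' hy hy'
    rw [mem_insert, Prod.mk.injEq] at hy hy'
    rcases hy with ⟨rfl, rfl⟩ | hy
    · rcases hy' with ⟨rfl, -⟩ | hy'
      · rfl
      · exact (mem_roots.1 hu y' hy').elim
    · rcases hy' with ⟨-, rfl⟩ | hy'
      · exact (mem_roots.1 hu y hy).elim
      · exact hM.1.2.1 x y y' hy hy'
  · intro x p hp hcyc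
    rcases hcyc.of_insert with h | ⟨hxw, hux⟩
    · exact hM.1.2.2 x p hp h
    · exact hnot (hux.trans hxw)

theorem stronglyIndep_roots {G : SimpleGraph V} (hM : Maximal (IsDirectedForest G.Adj) M) :
    StronglyIndep G (roots M) := by
  constructor
  · intro x hx y hy hxy
    exact G.ne_of_adj hxy (eq_of_reflTransGen_of_mem_roots hy
      (reflTransGen_of_mem_roots hM hx hxy.symm))
  · intro x hx y hy hne
    refine Set.disjoint_left.2 fun w hxw hyw => ?_
    rcases hM.1.reflTransGen_total (reflTransGen_of_mem_roots hM hx (G.adj_symm hxw))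
        (reflTransGen_of_mem_roots hM hy (G.adj_symm hyw)) with h | h
    · exact hne (eq_of_reflTransGen_of_mem_roots hy h)
    · exact hne (eq_of_reflTransGen_of_mem_roots hx h).symm

end Forests

section Stars

variable {V : Type} [Fintype V] [DecidableEq V] {G : SimpleGraph V} [DecidableRel G.Adj]
  {A : Finset V}

variable (G) in
def starForest (A : Finset V) : Finset (V × V) := {e | e.1 ∈ A ∧ G.Adj e.1 e.2}

theorem mem_starForest {e : V × V} : e ∈ starForest G A ↔ e.1 ∈ A ∧ G.Adj e.1 e.2 := by
  simp [starForest]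

theorem StronglyIndep.isDirectedForest_starForest (hA : StronglyIndep G A) :
    IsDirectedForest G.Adj (starForest G A) := by
  refine ⟨fun e he => (mem_starForest.1 he).2, ?_, ?_⟩
  · intro x y y' hy hy'
    rw [mem_starForest] at hy hy'
    by_contra hne
    exact Set.disjoint_left.1 (hA.2 y hy.1 y' hy'.1 hne) hy.2 hy'.2
  · rintro x (_ | ⟨c, _ | ⟨d, q⟩⟩) hp hcyc
    · exact hp rfl
    · obtain ⟨hxc, rfl : c = x⟩ := hcyc
      exact G.irrefl (mem_starForest.1 hxc).2
    · have hxc := mem_starForest.1 hcyc.1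
      exact hA.1 x hxc.1 c (mem_starForest.1 hcyc.2.1).1 hxc.2

theorem subset_roots_of_starForest_subset {M : Finset (V × V)}
    (hM : IsDirectedForest G.Adj M) (hAM : starForest G A ⊆ M) : A ⊆ roots M := by
  intro a ha
  refine mem_roots.2 fun y hya => ?_
  have hay : (a, y) ∈ M := hAM (mem_starForest.2 ⟨ha, G.adj_symm (hM.1 _ hya)⟩)
  exact hM.2.2 a [y, a] (List.cons_ne_nil _ _) ⟨hay, hya, rfl⟩

end Stars

/-- For a simple graph `G` with double directed graph `D`, the `k`-skeleton of the complex
of directed trees of `D` is pure (every directed forest with at most `k+1` edges extends to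
one with exactly `k+1` edges) if and only if `k ≤ |V(G)| - 1 - r(G)`, where `r(G)` is the
maximal cardinality of a strongly independent subset of `V(G)`. -/
theorem skeleton_pure_iff {V : Type} [Fintype V] [DecidableEq V] (G : SimpleGraph V)
    (k r : ℕ)
    (hr : IsGreatest {m : ℕ | ∃ A : Finset V, StronglyIndep G A ∧ A.card = m} r) :
    (∀ F : Finset (V × V), IsDirectedForest G.Adj F → F.card ≤ k + 1 →
        ∃ F' : Finset (V × V), IsDirectedForest G.Adj F' ∧ F ⊆ F' ∧ F'.card = k + 1) ↔
      k + 1 + r ≤ Fintype.card V := by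
  classical
  obtain ⟨⟨A, hA, rfl⟩, hr⟩ := hr
  rw [forall_exists_superset_card_eq_iff (isLowerSet_setOf_isDirectedForest G.Adj)]
  constructor
  · intro hfacet
    obtain ⟨M, hAM, hM⟩ := Finite.exists_le_maximal hA.isDirectedForest_starForest
    have hcard := card_add_card_roots hM.1.injOn_snd
    have hroots := card_le_card (subset_roots_of_starForest_subset hM.1 hAM)
    have hk := hfacet M hM
    omega
  · intro hk M hM
    have hcard := card_add_card_roots hM.1.injOn_snd
    have hroots := hr ⟨_, stronglyIndep_roots hM, rfl⟩
    omega
end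

section
/- Let D be a directed graph, v a leaf of D with unique neighbor x, such that x→v ∈ E(D) and v→x ∉ E(D). Then every facet of the complex of directed trees Δ(D) contains the edge x→v, and Δ(D) is a cone with apex x→v over Δ(D \ {v}); in particular Δ(D) is contractible. -/
/-- The geometric realization of an abstract simplicial complex `K` on a finite vertex
set `α`: convex combinations of vertices whose support is (contained in) a face of `K`. -/
def geomRealization {α : Type} [Fintype α] (K : Finset α → Prop) : Set (α → ℝ) :=
  {f | (∀ a : α, 0 ≤ f a) ∧ (∑ a : α, f a) = 1 ∧
    ∃ F : Finset α, K F ∧ ∀ a : α, f a ≠ 0 → a ∈ F}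

/-! Since `v` has no out-edges, no directed cycle passes through `v`, and the only possible
in-edge of `v` is `x → v`. Hence adding or removing `x → v` never creates or destroys a cycle
or a second in-edge, so `Δ(D)` is a cone with apex `x → v`, and its geometric realization is
star-convex about that vertex. -/

open Finset

/-- The digraph `D \ {v}`. -/
def deleteVertex {V : Type} (E : V → V → Prop) (v : V) : V → V → Prop :=
  fun a b => E a b ∧ a ≠ v ∧ b ≠ v

section Dipath

variable {V : Type}

theorem IsDipath.mono_s9 {T T' : V → V → Prop} (h : ∀ a b, T a b → T' a b) :
    ∀ {a b : V} {p : List V}, IsDipath T a b p → IsDipath T' a b p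
  | _, _, [], hp => hp
  | _, _, _ :: _, ⟨hac, hp⟩ => ⟨h _ _ hac, IsDipath.mono_s9 h hp⟩

theorem IsDipath.eq_or_exists_rel_of_mem {T : V → V → Prop} :
    ∀ {a b w : V} {p : List V}, IsDipath T a b p → w ∈ a :: p → w = b ∨ ∃ c, T w c
  | _, _, _, [], hp, hw => .inl ((List.mem_singleton.mp hw).trans hp)
  | _, _, _, c :: _, ⟨hac, hp⟩, hw => by
    rcases List.mem_cons.mp hw with rfl | hw
    · exact .inr ⟨c, hac⟩
    · exact hp.eq_or_exists_rel_of_mem hw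

theorem IsDipath.exists_rel_of_mem_of_cycle {T : V → V → Prop} {a w : V} {p : List V}
    (hp : IsDipath T a a p) (hne : p ≠ []) (hw : w ∈ p) : ∃ c, T w c := by
  rcases hp.eq_or_exists_rel_of_mem (List.mem_cons_of_mem a hw) with rfl | hout
  · obtain ⟨c, q, rfl⟩ := List.exists_cons_of_ne_nil hne
    exact ⟨c, hp.1⟩
  · exact hout

variable [DecidableEq V]

theorem IsDipath.erase {F : Finset (V × V)} {e : V × V} :
    ∀ {a b : V} {p : List V}, IsDipath (edgeRel F) a b p → (∀ z ∈ p, z ≠ e.2) →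
      IsDipath (edgeRel (F.erase e)) a b p
  | _, _, [], hp, _ => hp
  | _, _, c :: _, ⟨hac, hp⟩, hz =>
    ⟨mem_erase.mpr ⟨fun he => hz c List.mem_cons_self (congrArg Prod.snd he), hac⟩,
      hp.erase fun z hzq => hz z (List.mem_cons_of_mem _ hzq)⟩

theorem IsDipath.erase_of_cycle {F : Finset (V × V)} {v y a : V} {p : List V}
    (hout : ∀ c, (v, c) ∉ F) (hp : IsDipath (edgeRel F) a a p) (hne : p ≠ []) :
    IsDipath (edgeRel (F.erase (y, v))) a a p :=
  hp.erase fun z hz hzv => by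
    obtain ⟨c, hc⟩ := hp.exists_rel_of_mem_of_cycle hne hz
    obtain rfl : z = v := hzv
    exact hout c hc

end Dipath

section Forest

variable {V : Type} [DecidableEq V] {E : V → V → Prop} {v x : V}

theorem isDirectedForest_empty : IsDirectedForest E ∅ :=
  ⟨fun _ he => absurd he (notMem_empty _), fun _ _ _ hy => absurd hy (notMem_empty _),
    fun _ p hp hcyc => by
      obtain ⟨c, q, rfl⟩ := List.exists_cons_of_ne_nil hp
      exact notMem_empty _ hcyc.1⟩

theorem IsDirectedForest.of_subset {E' : V → V → Prop} {F G : Finset (V × V)}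
    (hF : IsDirectedForest E F) (hGF : G ⊆ F) (hG : ∀ e ∈ G, E' e.1 e.2) :
    IsDirectedForest E' G :=
  ⟨hG, fun z y y' hy hy' => hF.2.1 z y y' (hGF hy) (hGF hy'),
    fun a p hp hcyc => hF.2.2 a p hp (hcyc.mono_s9 fun _ _ hab => hGF hab)⟩

theorem IsDirectedForest.erase_leafEdge {F : Finset (V × V)} (hnE : ¬ E v x)
    (hleaf : ∀ z w : V, E z w → (z = v → w = x) ∧ (w = v → z = x))
    (hF : IsDirectedForest E F) : IsDirectedForest (deleteVertex E v) (F.erase (x, v)) := by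
  refine hF.of_subset (erase_subset _ _) fun e he => ?_
  obtain ⟨hne, heF⟩ := mem_erase.mp he
  have hE := hF.1 e heF
  refine ⟨hE, fun h1 => hnE ?_, fun h2 => hne (Prod.ext ((hleaf _ _ hE).2 h2) h2)⟩
  rwa [← h1, ← (hleaf _ _ hE).1 h1]

theorem IsDirectedForest.of_erase_leafEdge {F : Finset (V × V)} (hne : x ≠ v) (hEx : E x v)
    (hF : IsDirectedForest (deleteVertex E v) (F.erase (x, v))) : IsDirectedForest E F := by
  have hedge : ∀ e ∈ F, e ≠ (x, v) → deleteVertex E v e.1 e.2 :=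
    fun e he hex => hF.1 e (mem_erase.mpr ⟨hex, he⟩)
  have hin : ∀ w, (w, v) ∈ F → w = x := fun w hw => by
    by_contra hwx
    exact (hedge _ hw fun h => hwx (congrArg Prod.fst h)).2.2 rfl
  have hout : ∀ c, (v, c) ∉ F := fun c hc =>
    (hedge _ hc fun h => hne (congrArg Prod.fst h).symm).2.1 rfl
  refine ⟨fun e he => ?_, fun z y y' hy hy' => ?_, fun a p hp hcyc => ?_⟩
  · by_cases hex : e = (x, v)
    · exact hex ▸ hEx
    · exact (hedge e he hex).1
  · by_cases hz : z = v
    · subst hz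
      rw [hin y hy, hin y' hy']
    · have hz' : ∀ w : V, (w, z) ≠ (x, v) := fun w h => hz (congrArg Prod.snd h)
      exact hF.2.1 z y y' (mem_erase.mpr ⟨hz' y, hy⟩) (mem_erase.mpr ⟨hz' y', hy'⟩)
  · exact hF.2.2 a p hp (hcyc.erase_of_cycle hout hp)

theorem IsFacet.mem_of_forall_insert {F : Finset (V × V)} {e : V × V}
    (hcone : ∀ G, IsDirectedForest E G → IsDirectedForest E (insert e G)) (hF : IsFacet E F) :
    e ∈ F :=
  hF.2 _ (hcone F hF.1) (subset_insert e F) ▸ mem_insert_self e F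

end Forest

theorem contractibleSpace_geomRealization_of_cone {α : Type} [Fintype α] [DecidableEq α]
    {K : Finset α → Prop} (a : α) (hcone : ∀ F, K F → K (insert a F)) (F₀ : Finset α)
    (hF₀ : K F₀) : ContractibleSpace (geomRealization K) := by
  have hapex : Pi.single a 1 ∈ geomRealization K := by
    refine ⟨fun b => ?_, by simp, insert a F₀, hcone F₀ hF₀, fun b hb => ?_⟩
    · by_cases hb : b = a <;> simp [hb]
    · by_cases hba : b = a
      · exact hba ▸ mem_insert_self a F₀
      · simp [hba] at hb
  have hstar : StarConvex ℝ (Pi.single a 1) (geomRealization K) := by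
    rintro f ⟨hf0, hf1, F, hF, hFsupp⟩ s t hs ht hst
    refine ⟨fun b => ?_, ?_, insert a F, hcone F hF, fun b hb => ?_⟩
    · exact add_nonneg (smul_nonneg hs (hapex.1 b)) (smul_nonneg ht (hf0 b))
    · simp [sum_add_distrib, ← mul_sum, hf1, hst]
    · by_cases hba : b = a
      · exact hba ▸ mem_insert_self a F
      · have hfb : f b ≠ 0 := fun h => hb (by simp [hba, h])
        exact mem_insert_of_mem (hFsupp b hfb)
  exact hstar.contractibleSpace ⟨_, hapex⟩

/-- Let `v` be a leaf of a digraph `E` with unique neighbor `x`, with `x → v ∈ E` and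
`v → x ∉ E`.  Then every facet of `Δ(E)` contains `x → v`, and `Δ(E)` is a cone with apex
`x → v` over `Δ(E \ {v})`: the faces of `Δ(E)` are exactly the sets whose part away from
`x → v` is a face of `Δ(E \ {v})`, and one may always add the apex.  In particular the
geometric realization of `Δ(E)` is contractible. -/
theorem cone_over_leaf {V : Type} [Fintype V] [DecidableEq V] (E : V → V → Prop) (v x : V)
    (hne : x ≠ v) (hEx : E x v) (hnE : ¬ E v x)
    (hleaf : ∀ z w : V, E z w → (z = v → w = x) ∧ (w = v → z = x)) :
    (∀ F : Finset (V × V), IsFacet E F → (x, v) ∈ F) ∧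
    (∀ F : Finset (V × V), IsDirectedForest E F ↔
        IsDirectedForest (fun a b => E a b ∧ a ≠ v ∧ b ≠ v) (F.erase (x, v))) ∧
    (∀ F : Finset (V × V), IsDirectedForest E F → IsDirectedForest E (insert (x, v) F)) ∧
    ContractibleSpace ↥(geomRealization fun F : Finset (V × V) => IsDirectedForest E F) := by
  have hiff : ∀ F : Finset (V × V), IsDirectedForest E F ↔
      IsDirectedForest (deleteVertex E v) (F.erase (x, v)) := fun F =>
    ⟨IsDirectedForest.erase_leafEdge hnE hleaf, .of_erase_leafEdge hne hEx⟩
  have hcone : ∀ F : Finset (V × V), IsDirectedForest E F →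
      IsDirectedForest E (insert (x, v) F) := fun F hF => by
    rwa [hiff, erase_insert_eq_erase, ← hiff]
  exact ⟨fun F => IsFacet.mem_of_forall_insert hcone, hiff, hcone,
    contractibleSpace_geomRealization_of_cone _ hcone ∅ isDirectedForest_empty⟩
end

section
/- Let D be a directed graph, v a leaf with unique neighbor x such that v→x ∈ E(D) and x→v ∉ E(D). Let y_1,...,y_k be the vertices of D \ {v} with y_i→x ∈ E(D). Then every facet F of Δ(D) either contains v→x and none of the edges y_i→x, or contains exactly one edge y_p→x and not v→x. -/
/-!
A leaf `v` with `v → x` and `x ↛ v` has no incoming edge at all. Adding an edge out of such a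
source `u` to a vertex `w` of in-degree zero keeps a directed forest a forest, since a cycle
through the new edge would have to enter `u`. So in a facet the head `x` of `v → x` has an
incoming edge, and as in-degrees in a forest are at most one, that edge is either `v → x` or a
unique `y → x` with `y ≠ v`.
-/

namespace IsDipath

variable {V : Type} {T T' : V → V → Prop}

theorem mem_of_ne_nil {b : V} :
    ∀ {p : List V} {a : V}, IsDipath T a b p → p ≠ [] → b ∈ p
  | [], _, _, hp => absurd rfl hp
  | [c], _, h, _ => by
    have hcb : c = b := h.2
    simp [hcb]
  | _ :: d :: q, _, h, _ => List.mem_cons_of_mem _ (mem_of_ne_nil h.2 (List.cons_ne_nil d q))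

theorem exists_rel_of_mem {b u : V} :
    ∀ {p : List V} {a : V}, IsDipath T a b p → u ∈ p → ∃ z, T z u
  | [], _, _, hu => absurd hu List.not_mem_nil
  | c :: _, a, h, hu => by
    rcases List.mem_cons.mp hu with rfl | hu
    · exact ⟨a, h.1⟩
    · exact exists_rel_of_mem h.2 hu

theorem mono_of_ne {b c : V} (hT : ∀ z w, T z w → z ≠ c → T' z w) :
    ∀ {p : List V} {a : V}, IsDipath T a b p → a ≠ c → c ∉ p → IsDipath T' a b p
  | [], _, h, _, _ => h
  | d :: _, a, h, ha, hc =>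
    ⟨hT a d h.1 ha, mono_of_ne hT h.2 (fun hd => hc (hd ▸ List.mem_cons_self))
      (fun hq => hc (List.mem_cons_of_mem d hq))⟩

end IsDipath

section

variable {V : Type} [DecidableEq V] {E : V → V → Prop} {F : Finset (V × V)} {u w : V}

theorem IsDirectedForest.insert_of_source (hF : IsDirectedForest E F) (huw : E u w)
    (hu : ∀ z, ¬ E z u) (hw : ∀ z, (z, w) ∉ F) : IsDirectedForest E (insert (u, w) F) := by
  obtain ⟨hFE, hInd, hAcyc⟩ := hF
  have hEdges : ∀ e ∈ insert (u, w) F, E e.1 e.2 := by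
    simpa only [Finset.forall_mem_insert] using ⟨huw, hFE⟩
  refine ⟨hEdges, ?_, ?_⟩
  · intro a y y' hy hy'
    simp only [Finset.mem_insert, Prod.mk.injEq] at hy hy'
    rcases hy with ⟨rfl, rfl⟩ | hy
    · rcases hy' with ⟨rfl, -⟩ | hy'
      · rfl
      · exact absurd hy' (hw y')
    · rcases hy' with ⟨-, rfl⟩ | hy'
      · exact absurd hy (hw y)
      · exact hInd a y y' hy hy'
  · intro a p hp hcycle
    have hup : u ∉ p := fun hup => by
      obtain ⟨z, hz⟩ := hcycle.exists_rel_of_mem hup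
      exact hu z (hEdges _ hz)
    have hau : a ≠ u := fun hau => hup (hau ▸ hcycle.mem_of_ne_nil hp)
    refine hAcyc a p hp (hcycle.mono_of_ne (fun z z' hzz' hz => ?_) hau hup)
    simpa [edgeRel, hz] using hzz'

theorem IsFacet.exists_mem_of_source (hF : IsFacet E F) (huw : E u w) (hu : ∀ z, ¬ E z u) :
    ∃ z, (z, w) ∈ F := by
  by_contra! hw
  have hInsert := hF.2 _ (hF.1.insert_of_source huw hu hw) (Finset.subset_insert _ _)
  exact hw u (hInsert ▸ Finset.mem_insert_self _ _)

end

theorem facet_dichotomy_leaf_general {V : Type} [DecidableEq V] (E : V → V → Prop) (v x : V)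
    (hEvx : E v x) (hnE : ¬ E x v)
    (hleaf : ∀ z w : V, E z w → (z = v → w = x) ∧ (w = v → z = x)) :
    ∀ F : Finset (V × V), IsFacet E F →
      ((v, x) ∈ F ∧ ∀ y : V, y ≠ v → (y, x) ∉ F) ∨
      ((v, x) ∉ F ∧ ∃! y : V, y ≠ v ∧ (y, x) ∈ F) := by
  intro F hF
  have hSource : ∀ z, ¬ E z v := fun z hzv => hnE ((hleaf z v hzv).2 rfl ▸ hzv)
  have hInDeg : ∀ y y', (y, x) ∈ F → (y', x) ∈ F → y = y' := hF.1.2.1 x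
  obtain ⟨z, hzx⟩ := hF.exists_mem_of_source hEvx hSource
  by_cases hzv : z = v
  · subst hzv
    exact Or.inl ⟨hzx, fun y hy hyx => hy (hInDeg y z hyx hzx)⟩
  · exact Or.inr ⟨fun hvx => hzv (hInDeg z v hzx hvx),
      z, ⟨hzv, hzx⟩, fun y hy => hInDeg y z hy.2 hzx⟩

/-- Let `v` be a leaf of a digraph `E` with unique neighbor `x`, with `v → x ∈ E` and
`x → v ∉ E`.  Then every facet `F` of `Δ(E)` either contains `v → x` and none of the edges
`y → x` with `y ≠ v`, or it does not contain `v → x` and contains exactly one edge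
`y → x` with `y ≠ v`. -/
theorem facet_dichotomy_leaf {V : Type} [DecidableEq V] (E : V → V → Prop) (v x : V)
    (hne : v ≠ x) (hEvx : E v x) (hnE : ¬ E x v)
    (hleaf : ∀ z w : V, E z w → (z = v → w = x) ∧ (w = v → z = x)) :
    ∀ F : Finset (V × V), IsFacet E F →
      ((v, x) ∈ F ∧ ∀ y : V, y ≠ v → (y, x) ∉ F) ∨
      ((v, x) ∉ F ∧ ∃! y : V, y ≠ v ∧ (y, x) ∈ F) :=
  facet_dichotomy_leaf_general E v x hEvx hnE hleaf
end

section
/- Let T be an undirected tree and let G be the graph whose vertices are the directed edges of the double direction D of T, with two directed edges adjacent in G iff they have the same sink, or they are the two opposite orientations of the same edge of T. Then a set A of directed edges is independent in G if and only if A is the edge set of a directed forest in D; that is, Δ(D) equals the independence complex I(G). -/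
/-- The graph on the arcs of the double direction of `G`: two arcs are adjacent iff they
are distinct and either have the same sink or are the two opposite orientations of the
same edge of `G`.  (Only pairs that are genuine arcs of `G` are ever adjacent.) -/
def arcGraph {V : Type} (G : SimpleGraph V) : SimpleGraph (V × V) where
  Adj e f := G.Adj e.1 e.2 ∧ G.Adj f.1 f.2 ∧ e ≠ f ∧
    (e.2 = f.2 ∨ (e.1 = f.2 ∧ e.2 = f.1))
  symm := by
    constructor
    rintro ⟨a, b⟩ ⟨c, d⟩ ⟨h1, h2, h3, h4⟩
    refine ⟨h2, h1, fun h => h3 h.symm, ?_⟩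
    rcases h4 with h | ⟨h, h'⟩
    · exact Or.inl h.symm
    · exact Or.inr ⟨h'.symm, h.symm⟩
  loopless := by constructor; rintro ⟨a, b⟩ ⟨-, -, h, -⟩; exact h rfl

/-! A closed directed path in `D` would give an arc `x → c` of `A` together with a walk from `c`
back to `x` along arcs of `A`. In a tree the only path from `c` to `x` is the edge itself, and a
walk contains the darts of its bypass, so the walk traverses `c → x`: both orientations of one
edge lie in `A`, which independence in the arc graph forbids. -/

open SimpleGraph

theorem SimpleGraph.IsAcyclic.mem_darts_of_adj {V : Type} {G : SimpleGraph V} (hG : G.IsAcyclic)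
    {u v : V} (w : G.Walk u v) (h : G.Adj u v) : ⟨(u, v), h⟩ ∈ w.darts := by
  classical
  have hbypass : w.bypass = Walk.cons h Walk.nil :=
    congrArg Subtype.val <|
      (hG.subsingleton_path u v).elim ⟨w.bypass, w.bypass_isPath⟩ (Path.singleton h)
  apply Walk.darts_bypass_subset_darts
  simp [hbypass]

section Dipath

variable {V : Type} {T : V → V → Prop} {G : SimpleGraph V}

theorem IsDipath.exists_walk (hT : ∀ u v, T u v → G.Adj u v) :
    ∀ {a b : V} {p : List V}, IsDipath T a b p → ∃ w : G.Walk a b, ∀ d ∈ w.darts, T d.fst d.snd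
  | _, _, [], rfl => ⟨Walk.nil, by simp⟩
  | _, _, _ :: _, ⟨hac, hp⟩ => by
    obtain ⟨w, hw⟩ := IsDipath.exists_walk hT hp
    exact ⟨Walk.cons (hT _ _ hac) w, by simpa [hac] using hw⟩

theorem SimpleGraph.IsAcyclic.not_isDipath_self (hG : G.IsAcyclic)
    (hT : ∀ u v, T u v → G.Adj u v) (hasymm : ∀ u v, T u v → ¬ T v u)
    {x : V} {p : List V} (hp : p ≠ []) : ¬ IsDipath T x x p := by
  obtain ⟨c, p, rfl⟩ := List.exists_cons_of_ne_nil hp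
  rintro ⟨hxc, hcx⟩
  obtain ⟨w, hw⟩ := hcx.exists_walk hT
  exact hasymm x c hxc (hw _ (hG.mem_darts_of_adj w (hT x c hxc).symm))

end Dipath

/-- For a tree `G` with double direction `D`, a set `A` of arcs of `D` is independent in
the arc graph (same sink, or opposite orientations, gives adjacency) if and only if `A`
is the edge set of a directed forest in `D`; that is, `Δ(D)` equals the independence
complex of the arc graph. -/
theorem forest_iff_indep_arcGraph {V : Type} [DecidableEq V] (G : SimpleGraph V)
    (hG : G.IsTree) (A : Finset (V × V)) (hA : ∀ e ∈ A, G.Adj e.1 e.2) :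
    (∀ e ∈ A, ∀ f ∈ A, ¬ (arcGraph G).Adj e f) ↔ IsDirectedForest G.Adj A := by
  constructor
  · intro hind
    have hasymm : ∀ a b, edgeRel A a b → ¬ edgeRel A b a := fun a b hab hba =>
      hind _ hab _ hba ⟨hA _ hab, hA _ hba, fun h => (hA _ hab).ne (congrArg Prod.fst h),
        Or.inr ⟨rfl, rfl⟩⟩
    refine ⟨hA, fun x y y' hy hy' => ?_, fun x p hp =>
      hG.isAcyclic.not_isDipath_self (fun u v h => hA (u, v) h) hasymm hp⟩
    by_contra hne
    exact hind _ hy _ hy' ⟨hA _ hy, hA _ hy', fun h => hne (congrArg Prod.fst h), Or.inl rfl⟩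
  · rintro ⟨-, hindeg, hnocycle⟩ ⟨a, b⟩ he ⟨c, d⟩ hf ⟨-, -, hne, rfl | ⟨rfl, rfl⟩⟩
    · exact hne (by rw [hindeg b a c he hf])
    · exact hnocycle a [b, a] (by simp) ⟨he, hf, rfl⟩
end

section
/- Let T be an undirected tree and let G be the graph on the directed edges of the double direction of T where two directed edges are adjacent iff they share the same sink or are opposite orientations of the same edge. Then G has no chordless cycle of length other than 3. -/
/-!
Write `v i` for the sink of the arc `c i`. Along the cycle each step either keeps the sink or
reverses the current arc, and two reversals in a row would revisit an arc. If some step reverses,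
pick `j` with `v j` farthest from a fixed root of the tree. The reversals just before and just
after `j` lead from `v j` to neighbours that are no farther from the root, and in a tree these
coincide (both are the parent of `v j`); this makes the two reversal steps
consecutive, which is impossible. Hence no step reverses, all arcs share a sink, and `c 0`, `c 2`
are adjacent; chordlessness then forces `m = 3`.
-/

namespace SimpleGraph

variable {V : Type*} {G : SimpleGraph V} {r a b u : V}

theorem exists_isPath_concat_of_dist_le (hr : G.Reachable r a) (h : G.Adj a u)
    (hd : G.dist r a ≤ G.dist r u) : ∃ q : G.Walk r a, (q.concat h).IsPath := by
  classical
  obtain ⟨q, hq, hlen⟩ := hr.exists_path_of_dist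
  refine ⟨q, hq.concat (fun hu => ?_) h⟩
  have := q.length_takeUntil_lt_length hu h.ne'
  have := G.dist_le (q.takeUntil u hu)
  omega

theorem IsAcyclic.eq_of_adj_of_dist_le (hG : G.IsAcyclic) (hra : G.Reachable r a)
    (hrb : G.Reachable r b) (ha : G.Adj a u) (hb : G.Adj b u) (hda : G.dist r a ≤ G.dist r u)
    (hdb : G.dist r b ≤ G.dist r u) : a = b := by
  obtain ⟨p, hp⟩ := exists_isPath_concat_of_dist_le hra ha hda
  obtain ⟨q, hq⟩ := exists_isPath_concat_of_dist_le hrb hb hdb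
  have hpq : p.concat ha = q.concat hb :=
    Subtype.mk.inj ((hG.subsingleton_path r u).elim ⟨_, hp⟩ ⟨_, hq⟩)
  exact (Walk.concat_inj hpq).1

end SimpleGraph

namespace ZMod

variable {m : ℕ} [NeZero m] {α : Type*} {P : ZMod m → Prop} {f : ZMod m → α}

theorem exists_next_apply_eq (hf : ∀ i, ¬ P i → f (i + 1) = f i) (hP : ∃ k, P k)
    (j : ZMod m) : ∃ k, P k ∧ f k = f j := by
  suffices key : ∀ n : ℕ, ∀ j, P (j + n) → ∃ k, P k ∧ f k = f j by
    obtain ⟨k, hk⟩ := hP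
    obtain ⟨n, hn⟩ := ZMod.natCast_zmod_surjective (k - j)
    exact key n j (by rwa [hn, add_sub_cancel])
  intro n
  induction n with
  | zero => exact fun j hj => ⟨j, by simpa using hj, rfl⟩
  | succ n ih =>
    intro j hj
    obtain ⟨k, hk, hkj⟩ :=
      ih (j + 1) (by rwa [Nat.cast_succ, add_comm (n : ZMod m), ← add_assoc] at hj)
    by_cases hPj : P j
    · exact ⟨j, hPj, rfl⟩
    · exact ⟨k, hk, hkj.trans (hf j hPj)⟩

theorem exists_prev_apply_add_one_eq (hf : ∀ i, ¬ P i → f (i + 1) = f i) (hP : ∃ k, P k)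
    (j : ZMod m) : ∃ k, P k ∧ f (k + 1) = f j := by
  suffices key : ∀ n : ℕ, ∀ j, P (j - 1 - n) → ∃ k, P k ∧ f (k + 1) = f j by
    obtain ⟨k, hk⟩ := hP
    obtain ⟨n, hn⟩ := ZMod.natCast_zmod_surjective (j - 1 - k)
    exact key n j (by rwa [hn, sub_sub_cancel])
  intro n
  induction n with
  | zero => exact fun j hj => ⟨j - 1, by simpa using hj, by rw [sub_add_cancel]⟩
  | succ n ih =>
    intro j hj
    obtain ⟨k, hk, hkj⟩ := ih (j - 1) (by rwa [Nat.cast_succ, sub_add_eq_sub_sub_swap] at hj)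
    by_cases hPj : P (j - 1)
    · exact ⟨j - 1, hPj, by rw [sub_add_cancel]⟩
    · exact ⟨k, hk, hkj.trans (by simpa using (hf (j - 1) hPj).symm)⟩

end ZMod

section arcGraph

variable {V : Type} {G : SimpleGraph V}

theorem arcGraph_adj_snd_eq_or_eq_swap {e f : V × V} (h : (arcGraph G).Adj e f) :
    f.2 = e.2 ∨ f = e.swap := by
  rcases h.2.2.2 with h | ⟨h₁, h₂⟩
  · exact Or.inl h.symm
  · exact Or.inr (Prod.ext h₂.symm h₁.symm)

variable {m : ℕ} {c : ZMod m → V × V}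

theorem two_eq_zero_of_eq_swap_of_eq_swap (hinj : Function.Injective c) {i : ZMod m}
    (h₀ : c (i + 1) = (c i).swap) (h₁ : c (i + 1 + 1) = (c (i + 1)).swap) :
    (2 : ZMod m) = 0 := by
  have : i + 1 + 1 = i + 0 := hinj (by rw [h₁, h₀, Prod.swap_swap, add_zero])
  rw [add_assoc, one_add_one_eq_two] at this
  exact add_left_cancel this

theorem SimpleGraph.IsTree.arcGraph_cycle_ne_swap [NeZero m] (hG : G.IsTree)
    (h2 : (2 : ZMod m) ≠ 0) (hinj : Function.Injective c)
    (hadj : ∀ i, (arcGraph G).Adj (c i) (c (i + 1))) (i : ZMod m) : c (i + 1) ≠ (c i).swap := by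
  intro hi
  set v : ZMod m → V := fun i => (c i).2
  have hstep : ∀ i, ¬ c (i + 1) = (c i).swap → v (i + 1) = v i := fun i h =>
    (arcGraph_adj_snd_eq_or_eq_swap (hadj i)).resolve_right h
  have hswap_adj : ∀ i, c (i + 1) = (c i).swap → G.Adj (v i) (v (i + 1)) := fun i h => by
    simpa [v, h] using ((hadj i).1).symm
  obtain ⟨j, hj⟩ := Finite.exists_max fun i => G.dist (v 0) (v i)
  obtain ⟨k, hk, hkj⟩ := ZMod.exists_next_apply_eq hstep ⟨i, hi⟩ j
  obtain ⟨l, hl, hlj⟩ := ZMod.exists_prev_apply_add_one_eq hstep ⟨i, hi⟩ j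
  have hparent : v l = v (k + 1) :=
    hG.2.eq_of_adj_of_dist_le (hG.1 _ _) (hG.1 _ _) (hlj ▸ hswap_adj l hl)
      (hkj ▸ (hswap_adj k hk).symm) (hj l) (hj (k + 1))
  have hkl : k = l + 1 := hinj <| by
    refine Prod.ext ?_ (hkj.trans hlj.symm)
    simp only [v] at hparent
    rw [hl, Prod.fst_swap, hparent, hk, Prod.snd_swap]
  exact h2 (two_eq_zero_of_eq_swap_of_eq_swap hinj hl (hkl ▸ hk))

end arcGraph

/-- For a tree `G`, the arc graph of the double direction of `G` has no chordless cycle of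
length other than `3`: any chordless cycle (an injective cyclic sequence of length
`m ≥ 3` whose only adjacencies are consecutive ones) has length `3`. -/
theorem arcGraph_no_long_chordless_cycles {V : Type} (G : SimpleGraph V) (hG : G.IsTree)
    (m : ℕ) (hm : 3 ≤ m) (c : ZMod m → V × V) (hinj : Function.Injective c)
    (hadj : ∀ i : ZMod m, (arcGraph G).Adj (c i) (c (i + 1)))
    (hchord : ∀ i j : ZMod m, (arcGraph G).Adj (c i) (c j) → j = i + 1 ∨ i = j + 1) :
    m = 3 := by
  have : NeZero m := ⟨by omega⟩
  have hdvd : ∀ k : ℕ, 0 < k → (k : ZMod m) = 0 → m ≤ k := fun k hk h =>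
    Nat.le_of_dvd hk ((ZMod.natCast_eq_zero_iff k m).1 h)
  have h2 : (2 : ZMod m) ≠ 0 := fun h => by
    have := hdvd 2 two_pos (by exact_mod_cast h); omega
  have hsink : ∀ i, (c (i + 1)).2 = (c i).2 := fun i =>
    (arcGraph_adj_snd_eq_or_eq_swap (hadj i)).resolve_right
      (hG.arcGraph_cycle_ne_swap h2 hinj hadj i)
  have h02 : (arcGraph G).Adj (c 0) (c 2) := by
    refine ⟨(hadj 0).1, (hadj 2).1, fun h => h2 (hinj h).symm, Or.inl ?_⟩
    rw [← one_add_one_eq_two, hsink, ← zero_add (1 : ZMod m), hsink]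
  rcases hchord 0 2 h02 with h | h
  · have := hdvd 1 one_pos (by rw [Nat.cast_one]; linear_combination h); omega
  · have := hdvd 3 three_pos (by norm_num; linear_combination -h); omega
end

section
/- Let T be a basic tree with 2n vertices: n leaves v_1,...,v_n and n non-leaves u_1,...,u_n with v_i adjacent to u_i, every non-leaf adjacent to exactly one leaf. Let D be the double direction of T. Then the set of peripheral edges {v_1→u_1, ..., v_n→u_n} is a facet of Δ(D), i.e., a maximal directed forest in D with n edges forming a spanning directed forest whose trees cover all 2n vertices. -/
section BasicTree

variable {V : Type} [Fintype V] [DecidableEq V]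

/-- Hypotheses describing a basic tree with `2n` vertices: a tree `G` whose vertex set is
the disjoint union of the leaves `v 0, …, v (n-1)` (vertices of degree `1`) and the
non-leaves `u 0, …, u (n-1)`, with `v i` adjacent to `u i` (so every non-leaf is adjacent
to exactly one leaf). -/
structure IsBasicTree (n : ℕ) (G : SimpleGraph V) [DecidableRel G.Adj]
    (v u : Fin n → V) : Prop where
  isTree : G.IsTree
  bij : Function.Bijective (Sum.elim v u : Fin n ⊕ Fin n → V)
  adj : ∀ i : Fin n, G.Adj (v i) (u i)
  leaf : ∀ i : Fin n, G.degree (v i) = 1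
  nonleaf : ∀ i : Fin n, 2 ≤ n → G.degree (u i) ≠ 1

end BasicTree

/-!
The peripheral edges `v i → u i` form a forest because every edge leaves a leaf and enters a
non-leaf, so no directed path has two edges, and the heads `u i` are distinct. It is maximal
because every arc `a → b` of the double direction either enters some `u j`, which already has
in-degree one, or enters a leaf `v j`; then `a = u j` since `v j` has degree one, and adding
`u j → v j` would close the 2-cycle with `v j → u j`.
-/

section DirectedForest

variable {V : Type}

theorem IsDipath.length_le_one {T : V → V → Prop} {S : Set V}
    (hT : ∀ x y, T x y → x ∈ S ∧ y ∉ S) :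
    ∀ {a b : V} {p : List V}, IsDipath T a b p → p.length ≤ 1
  | _, _, [], _ => by simp
  | _, _, [_], _ => by simp
  | _, _, _ :: _ :: _, ⟨hac, hcd, _⟩ => absurd (hT _ _ hcd).1 (hT _ _ hac).2

variable [DecidableEq V]

theorem IsDirectedForest.swap_not_mem {E : V → V → Prop} {F : Finset (V × V)}
    (hF : IsDirectedForest E F) {a b : V} (hab : (a, b) ∈ F) : (b, a) ∉ F :=
  fun hba => hF.2.2 a [b, a] (List.cons_ne_nil _ _) ⟨hab, hba, rfl⟩

theorem isDirectedForest_of_forall_mem_not_mem {E : V → V → Prop} {F : Finset (V × V)}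
    (S : Set V) (hE : ∀ e ∈ F, E e.1 e.2) (hS : ∀ e ∈ F, e.1 ∈ S ∧ e.2 ∉ S)
    (hhead : Set.InjOn Prod.snd (F : Set (V × V))) : IsDirectedForest E F := by
  have hT : ∀ x y, edgeRel F x y → x ∈ S ∧ y ∉ S := fun x y h => hS (x, y) h
  refine ⟨hE, fun x y y' hy hy' => congrArg Prod.fst (hhead hy hy' rfl), ?_⟩
  rintro x p hp hcycle
  match p, hcycle, IsDipath.length_le_one hT hcycle with
  | [], _, _ => exact hp rfl
  | [_], ⟨hxc, rfl⟩, _ => exact (hT _ _ hxc).2 (hT _ _ hxc).1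

theorem IsDirectedForest.isFacet {E : V → V → Prop} {F : Finset (V × V)}
    (hF : IsDirectedForest E F)
    (hcover : ∀ a b, E a b → (∃ c, (c, b) ∈ F) ∨ (b, a) ∈ F) : IsFacet E F := by
  refine ⟨hF, fun F' hF' hsub => (Finset.Subset.antisymm · hsub) ?_⟩
  rintro ⟨a, b⟩ hab
  rcases hcover a b (hF'.1 _ hab) with ⟨c, hcb⟩ | hba
  · rwa [hF'.2.1 b a c hab (hsub hcb)]
  · exact absurd hab (hF'.swap_not_mem (hsub hba))

end DirectedForest

section BasicTree

variable {V : Type} {n : ℕ} {v u : Fin n → V}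

def peripheralEdges [DecidableEq V] (v u : Fin n → V) : Finset (V × V) :=
  Finset.univ.image fun i : Fin n => (v i, u i)

theorem mem_peripheralEdges [DecidableEq V] {e : V × V} :
    e ∈ peripheralEdges v u ↔ ∃ i, v i = e.1 ∧ u i = e.2 := by
  simp [peripheralEdges, Prod.ext_iff]

namespace IsBasicTree

variable [Fintype V] {G : SimpleGraph V} [DecidableRel G.Adj] (h : IsBasicTree n G v u)
include h

theorem v_injective : Function.Injective v :=
  (Sum.elim_injective.mp h.bij.injective).1

theorem u_injective : Function.Injective u :=
  (Sum.elim_injective.mp h.bij.injective).2.1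

theorem v_ne_u (i j : Fin n) : v i ≠ u j :=
  (Sum.elim_injective.mp h.bij.injective).2.2 i j

theorem eq_u_of_adj_v {a : V} {j : Fin n} (ha : G.Adj (v j) a) : a = u j :=
  (SimpleGraph.degree_eq_one_iff_existsUnique_adj.mp (h.leaf j)).unique ha (h.adj j)

theorem exists_eq_v_or_eq_u (x : V) : ∃ i, v i = x ∨ u i = x := by
  obtain ⟨i | i, rfl⟩ := h.bij.surjective x
  exacts [⟨i, Or.inl rfl⟩, ⟨i, Or.inr rfl⟩]

variable [DecidableEq V]

theorem isDirectedForest_peripheralEdges : IsDirectedForest G.Adj (peripheralEdges v u) := by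
  refine isDirectedForest_of_forall_mem_not_mem (Set.range v) ?_ ?_ ?_
  · rintro ⟨a, b⟩ he
    obtain ⟨i, rfl, rfl⟩ := mem_peripheralEdges.mp he
    exact h.adj i
  · rintro ⟨a, b⟩ he
    obtain ⟨i, rfl, rfl⟩ := mem_peripheralEdges.mp he
    exact ⟨⟨i, rfl⟩, fun ⟨j, hj⟩ => h.v_ne_u j i hj⟩
  · rintro ⟨a, b⟩ he ⟨a', b'⟩ he' (rfl : b = b')
    obtain ⟨i, rfl, rfl⟩ := mem_peripheralEdges.mp he
    obtain ⟨j, rfl, hj⟩ := mem_peripheralEdges.mp he'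
    rw [h.u_injective hj]

theorem isFacet_peripheralEdges : IsFacet G.Adj (peripheralEdges v u) := by
  refine h.isDirectedForest_peripheralEdges.isFacet fun a b hab => ?_
  obtain ⟨j, rfl | rfl⟩ := h.exists_eq_v_or_eq_u b
  · exact Or.inr (mem_peripheralEdges.mpr ⟨j, rfl, (h.eq_u_of_adj_v hab.symm).symm⟩)
  · exact Or.inl ⟨v j, mem_peripheralEdges.mpr ⟨j, rfl, rfl⟩⟩

end IsBasicTree

end BasicTree

theorem peripheral_edges_facet_general {V : Type} [Fintype V] [DecidableEq V] (n : ℕ)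
    (G : SimpleGraph V) [DecidableRel G.Adj] (v u : Fin n → V)
    (hbasic : IsBasicTree n G v u) :
    IsFacet G.Adj (Finset.univ.image fun i : Fin n => (v i, u i)) ∧
    (Finset.univ.image fun i : Fin n => (v i, u i)).card = n ∧
    ∀ x : V, ∃ e ∈ (Finset.univ.image fun i : Fin n => (v i, u i) : Finset (V × V)),
      e.1 = x ∨ e.2 = x := by
  refine ⟨hbasic.isFacet_peripheralEdges, ?_, fun x => ?_⟩
  · rw [Finset.card_image_of_injective _ fun i j hij => hbasic.v_injective (Prod.ext_iff.mp hij).1]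
    exact Finset.card_fin n
  · obtain ⟨i, hi⟩ := hbasic.exists_eq_v_or_eq_u x
    exact ⟨(v i, u i), Finset.mem_image_of_mem _ (Finset.mem_univ i), hi⟩

/-- For a basic tree `T` with `2n` vertices and double direction `D`, the set of
peripheral edges `{v i → u i}` is a facet of `Δ(D)` with `n` edges, and its trees cover
all `2n` vertices. -/
theorem peripheral_edges_facet {V : Type} [Fintype V] [DecidableEq V] (n : ℕ) (hn : 1 ≤ n)
    (G : SimpleGraph V) [DecidableRel G.Adj] (v u : Fin n → V)
    (hbasic : IsBasicTree n G v u) :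
    IsFacet G.Adj (Finset.univ.image fun i : Fin n => (v i, u i)) ∧
    (Finset.univ.image fun i : Fin n => (v i, u i)).card = n ∧
    ∀ x : V, ∃ e ∈ (Finset.univ.image fun i : Fin n => (v i, u i) : Finset (V × V)),
      e.1 = x ∨ e.2 = x :=
  peripheral_edges_facet_general n G v u hbasic
end
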